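/- arXiv:2407.05158 — 8 statements merged into one kernel-verified Lean document; each statement's English description precedes it below -/
import Mathlib

section
/- The gonality of the octahedron graph (the complete tripartite graph K_{2,2,2}) equals 4. -/
open Finset

/-- A finite loopless multigraph on a vertex type `V`, given by a symmetric
edge-multiplicity function with zero diagonal. -/
structure Multigraph (V : Type) [Fintype V] [DecidableEq V] where
  m : V → V → ℕ
  symm : ∀ u v, m u v = m v u
  loopless : ∀ v, m v v = 0

namespace Multigraph

variable {V : Type} [Fintype V] [DecidableEq V] (G : Multigraph V)

/-- The underlying simple graph: adjacent iff joined by at least one edge. -/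
def toSimpleGraph : SimpleGraph V where
  Adj u v := 0 < G.m u v
  symm := by
    constructor
    intro u v h
    rw [G.symm v u]
    exact h
  loopless := by
    constructor
    intro v h
    rw [G.loopless v] at h
    exact lt_irrefl 0 h

/-- A multigraph is connected if its underlying simple graph is. -/
def Connected : Prop := G.toSimpleGraph.Connected

/-- The valence of a vertex: the number of edges incident to it. -/
def val (v : V) : ℕ := ∑ w, G.m v w

end Multigraph

/-- The degree of a divisor: the sum of its values. -/
def Divisor.deg {V : Type} [Fintype V] (D : V → ℤ) : ℤ := ∑ v, D v

/-- A divisor is effective if all its values are nonnegative. -/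
def Divisor.Effective {V : Type} (D : V → ℤ) : Prop := ∀ v, 0 ≤ D v

namespace Multigraph

variable {V : Type} [Fintype V] [DecidableEq V] (G : Multigraph V)

/-- The result of firing the vertex `v`: `v` loses its valence many chips, and
every other vertex `w` gains `m v w` chips. -/
def fire (v : V) (D : V → ℤ) : V → ℤ :=
  fun w => D w + (G.m v w : ℤ) - if w = v then (G.val v : ℤ) else 0

/-- Two divisors are equivalent if one is obtained from the other by a finite
sequence of firing moves. -/
def Equivalent (D D' : V → ℤ) : Prop :=
  Relation.ReflTransGen (fun A B => ∃ v, B = G.fire v A) D D'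

/-- A divisor `D` wins the Gonality Game if for every vertex `q`, the divisor
`D - 1_q` is equivalent to an effective divisor. -/
def Winning (D : V → ℤ) : Prop :=
  ∀ q : V, ∃ D' : V → ℤ,
    G.Equivalent (fun w => D w - if w = q then 1 else 0) D' ∧ Divisor.Effective D'

/-- The gonality of `G`: the minimum degree of an effective divisor that wins
the Gonality Game. -/
noncomputable def gonality : ℕ :=
  sInf {n : ℕ | ∃ D : V → ℤ, Divisor.Effective D ∧ G.Winning D ∧ Divisor.deg D = (n : ℤ)}

end Multigraph

/-- The multigraph associated to a simple graph: one edge for each adjacency. -/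
def Multigraph.ofSimpleGraph {V : Type} [Fintype V] [DecidableEq V]
    (G : SimpleGraph V) [DecidableRel G.Adj] : Multigraph V where
  m u v := if G.Adj u v then 1 else 0
  symm := by
    intro u v
    by_cases h : G.Adj u v
    · simp [h, h.symm]
    · have h' : ¬ G.Adj v u := fun hvu => h hvu.symm
      simp [h, h']
  loopless := by intro v; simp

/-- The octahedron graph `K_{2,2,2}`: six vertices in three pairs, two vertices
adjacent iff they lie in different pairs. -/
def octahedronGraph : SimpleGraph (Fin 3 × Fin 2) where
  Adj u v := u.1 ≠ v.1
  symm := ⟨fun _ _ h => Ne.symm h⟩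
  loopless := ⟨fun _ h => h rfl⟩

instance : DecidableRel octahedronGraph.Adj :=
  fun u v => inferInstanceAs (Decidable (u.1 ≠ v.1))

/-- The complete multipartite graph with clusters `Fin (n i)`, `i : Fin k`:
two vertices are adjacent iff they lie in different clusters. -/
def completeMultipartiteGraph' (k : ℕ) (n : Fin k → ℕ) :
    SimpleGraph (Σ i : Fin k, Fin (n i)) where
  Adj u v := u.1 ≠ v.1
  symm := ⟨fun _ _ h => Ne.symm h⟩
  loopless := ⟨fun _ h => h rfl⟩

instance (k : ℕ) (n : Fin k → ℕ) : DecidableRel (completeMultipartiteGraph' k n).Adj :=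
  fun u v => inferInstanceAs (Decidable (u.1 ≠ v.1))

/-- The cube graph `Q_3`: vertices are binary strings of length 3, adjacent iff
they differ in exactly one coordinate. -/
def cubeGraph : SimpleGraph (Fin 3 → Bool) where
  Adj u v := (Finset.univ.filter fun i => u i ≠ v i).card = 1
  symm := by
    constructor
    intro u v h
    have : (Finset.univ.filter fun i => v i ≠ u i)
        = (Finset.univ.filter fun i => u i ≠ v i) := by
      apply Finset.filter_congr
      intro i _
      exact ne_comm
    rw [this]
    exact h
  loopless := by
    constructor
    intro v h
    simp at h

instance : DecidableRel cubeGraph.Adj :=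
  fun u v => inferInstanceAs (Decidable ((Finset.univ.filter fun i => u i ≠ v i).card = 1))

section Aux

open Multigraph

variable {V : Type} [Fintype V] [DecidableEq V] (G : Multigraph V)

lemma deg_fire (v : V) (D : V → ℤ) : Divisor.deg (G.fire v D) = Divisor.deg D := by
  unfold Divisor.deg Multigraph.fire
  have h1 : ∑ w, (if w = v then (G.val v : ℤ) else 0) = (G.val v : ℤ) := by
    simp
  have h2 : ∑ w, (G.m v w : ℤ) = (G.val v : ℤ) := by
    unfold Multigraph.val; push_cast; ring
  rw [Finset.sum_sub_distrib, Finset.sum_add_distrib, h1, h2]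
  ring

lemma deg_equiv {D D' : V → ℤ} (h : G.Equivalent D D') :
    Divisor.deg D' = Divisor.deg D := by
  induction h with
  | refl => rfl
  | tail _ step ih =>
      obtain ⟨v, rfl⟩ := step
      rw [deg_fire, ih]

lemma pair_fire (N : ℕ) (u : V → ZMod N)
    (hu : ∀ v, ∑ w, u w * (G.m v w : ZMod N) = u v * (G.val v : ZMod N))
    (v : V) (D : V → ℤ) :
    ∑ w, u w * ((G.fire v D w : ℤ) : ZMod N) = ∑ w, u w * ((D w : ℤ) : ZMod N) := by
  unfold Multigraph.fire
  have : ∀ w, u w * (((D w + (G.m v w : ℤ) - if w = v then (G.val v : ℤ) else 0) : ℤ) : ZMod N)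
      = u w * ((D w : ℤ) : ZMod N) + u w * ((G.m v w : ℕ) : ZMod N)
        - (if w = v then u v * ((G.val v : ℕ) : ZMod N) else 0) := by
    intro w
    by_cases h : w = v
    · subst h
      rw [if_pos rfl, if_pos rfl]
      push_cast
      ring
    · rw [if_neg h, if_neg h]
      push_cast
      ring
  rw [Finset.sum_congr rfl (fun w _ => this w), Finset.sum_sub_distrib,
    Finset.sum_add_distrib]
  simp [hu v]

lemma pair_equiv (N : ℕ) (u : V → ZMod N)
    (hu : ∀ v, ∑ w, u w * (G.m v w : ZMod N) = u v * (G.val v : ZMod N))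
    {D D' : V → ℤ} (h : G.Equivalent D D') :
    ∑ w, u w * ((D' w : ℤ) : ZMod N) = ∑ w, u w * ((D w : ℤ) : ZMod N) := by
  induction h with
  | refl => rfl
  | tail _ step ih =>
      obtain ⟨v, rfl⟩ := step
      rw [pair_fire G N u hu, ih]

end Aux

section Oct

abbrev OctV : Type := Fin 3 × Fin 2

abbrev octG : Multigraph OctV := Multigraph.ofSimpleGraph octahedronGraph

/-- Four vectors in the kernel of the octahedron Laplacian mod 24. -/
def octu : Fin 4 → OctV → ZMod 24 := fun i v =>
  ![![0,12,12,0,12,0], ![0,18,18,0,3,3], ![1,19,0,0,23,5], ![1,1,1,1,1,1]] i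
    ⟨2 * v.1.val + v.2.val, by omega⟩

lemma octu_ker : ∀ i v, ∑ w, octu i w * (octG.m v w : ZMod 24)
    = octu i v * (octG.val v : ZMod 24) := by decide

/-- The winning divisor of degree 4. -/
def octD : OctV → ℤ := fun v => if v.1 = 2 then 0 else 1

set_option maxRecDepth 10000 in
set_option maxHeartbeats 4000000 in
/-- The key finite check (curried form): every effective divisor of degree at most 3
has a vertex `q` such that subtracting a chip at `q` is detected (via the mod-24
pairings) as inequivalent to every effective divisor of one smaller degree. -/
lemma octKD' : ∀ a b c d e f : Fin 4,
    a.val + b.val + c.val + d.val + e.val + f.val ≤ 3 → ∃ q : OctV,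
    ∀ a' b' c' d' e' f' : Fin 3,
      a'.val + b'.val + c'.val + d'.val + e'.val + f'.val + 1
        = a.val + b.val + c.val + d.val + e.val + f.val →
      ∃ i : Fin 4,
        (octu i (0,0) * (a.val : ZMod 24) + octu i (0,1) * b.val + octu i (1,0) * c.val
          + octu i (1,1) * d.val + octu i (2,0) * e.val + octu i (2,1) * f.val)
          - octu i q
        ≠ octu i (0,0) * (a'.val : ZMod 24) + octu i (0,1) * b'.val + octu i (1,0) * c'.val
          + octu i (1,1) * d'.val + octu i (2,0) * e'.val + octu i (2,1) * f'.val := by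
  decide

lemma sum6 {M : Type*} [AddCommMonoid M] (g : OctV → M) :
    ∑ w, g w = g (0,0) + g (0,1) + g (1,0) + g (1,1) + g (2,0) + g (2,1) := by
  rw [Fintype.sum_prod_type, Fin.sum_univ_three, Fin.sum_univ_two, Fin.sum_univ_two,
    Fin.sum_univ_two]
  abel

lemma octKD : ∀ t : OctV → Fin 4, (∑ w, (t w).val) ≤ 3 → ∃ q : OctV,
    ∀ s : OctV → Fin 3, (∑ w, (s w).val) + 1 = (∑ w, (t w).val) →
      ∃ i : Fin 4, (∑ w, octu i w * ((t w).val : ZMod 24)) - octu i q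
        ≠ ∑ w, octu i w * ((s w).val : ZMod 24) := by
  intro t ht
  rw [sum6 (fun w => (t w).val)] at ht
  obtain ⟨q, hq⟩ := octKD' (t (0,0)) (t (0,1)) (t (1,0)) (t (1,1)) (t (2,0)) (t (2,1)) ht
  refine ⟨q, fun s hs => ?_⟩
  rw [sum6 (fun w => (s w).val), sum6 (fun w => (t w).val)] at hs
  obtain ⟨i, hi⟩ := hq (s (0,0)) (s (0,1)) (s (1,0)) (s (1,1)) (s (2,0)) (s (2,1)) hs
  refine ⟨i, ?_⟩
  rw [sum6 (fun w => octu i w * ((t w).val : ZMod 24)),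
    sum6 (fun w => octu i w * ((s w).val : ZMod 24))]
  exact hi

end Oct

/-- The gonality of the octahedron graph `K_{2,2,2}` equals `4`. -/
theorem gonality_octahedron :
    (Multigraph.ofSimpleGraph octahedronGraph).gonality = 4 := by
  have hS : ∀ n ∈ {n : ℕ | ∃ D : OctV → ℤ, Divisor.Effective D ∧ octG.Winning D ∧
      Divisor.deg D = (n : ℤ)}, 4 ≤ n := by
    rintro n ⟨D, hEff, hWin, hdeg⟩
    by_contra hn
    push_neg at hn
    have hdegD : Divisor.deg D ≤ 3 := by
      rw [hdeg]; exact_mod_cast Nat.lt_succ_iff.mp hn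
    have hDle : ∀ v, D v ≤ 3 := fun v =>
      le_trans (Finset.single_le_sum (fun i _ => hEff i) (Finset.mem_univ v)) hdegD
    set t : OctV → Fin 4 := fun v =>
      ⟨(D v).toNat, by have h1 := hEff v; have h2 := hDle v; omega⟩ with ht
    have htv : ∀ v, D v = ((t v).val : ℤ) := fun v => by
      simp [ht, Int.toNat_of_nonneg (hEff v)]
    have htsumZ : ((∑ w, (t w).val : ℕ) : ℤ) = Divisor.deg D := by
      push_cast
      exact (Finset.sum_congr rfl fun w _ => (htv w).symm)
    have htsum : (∑ w, (t w).val) ≤ 3 := by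
      have := htsumZ ▸ hdegD
      exact_mod_cast this
    obtain ⟨q, hq⟩ := octKD t htsum
    obtain ⟨D', hEquiv, hEff'⟩ := hWin q
    have hdegD' : Divisor.deg D' = Divisor.deg D - 1 := by
      rw [deg_equiv _ hEquiv]
      unfold Divisor.deg
      rw [Finset.sum_sub_distrib]
      simp
    have hD'nonneg : (0 : ℤ) ≤ Divisor.deg D' := Finset.sum_nonneg fun v _ => hEff' v
    have hdD'2 : Divisor.deg D' ≤ 2 := by omega
    have hD'le : ∀ v, D' v ≤ 2 := fun v =>
      le_trans (Finset.single_le_sum (fun i _ => hEff' i) (Finset.mem_univ v)) hdD'2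
    set s : OctV → Fin 3 := fun v =>
      ⟨(D' v).toNat, by have h1 := hEff' v; have h2 := hD'le v; omega⟩ with hs
    have hsv : ∀ v, D' v = ((s v).val : ℤ) := fun v => by
      simp [hs, Int.toNat_of_nonneg (hEff' v)]
    have hssumZ : ((∑ w, (s w).val : ℕ) : ℤ) = Divisor.deg D' := by
      push_cast
      exact (Finset.sum_congr rfl fun w _ => (hsv w).symm)
    have hssum : (∑ w, (s w).val) + 1 = (∑ w, (t w).val) := by
      have h1 : ((∑ w, (s w).val : ℕ) : ℤ) + 1 = ((∑ w, (t w).val : ℕ) : ℤ) := by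
        rw [hssumZ, htsumZ, hdegD']; ring
      exact_mod_cast h1
    obtain ⟨i, hne⟩ := hq s hssum
    apply hne
    have hpair := pair_equiv octG 24 (octu i) (octu_ker i) hEquiv
    have key : ∑ w, octu i w * (((D w - if w = q then 1 else 0 : ℤ)) : ZMod 24)
        = (∑ w, octu i w * ((t w).val : ZMod 24)) - octu i q := by
      have hterm : ∀ w ∈ Finset.univ,
          octu i w * (((D w - if w = q then 1 else 0 : ℤ)) : ZMod 24)
          = octu i w * ((t w).val : ZMod 24) - (if w = q then octu i q else 0) := by
        intro w _
        by_cases h : w = q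
        · subst h
          rw [if_pos rfl, if_pos rfl, htv w]
          push_cast
          ring
        · rw [if_neg h, if_neg h, htv w]
          push_cast
          ring
      rw [Finset.sum_congr rfl hterm, Finset.sum_sub_distrib]
      simp
    calc (∑ w, octu i w * ((t w).val : ZMod 24)) - octu i q
        = ∑ w, octu i w * (((D w - if w = q then 1 else 0 : ℤ)) : ZMod 24) := key.symm
      _ = ∑ w, octu i w * ((D' w : ℤ) : ZMod 24) := hpair.symm
      _ = ∑ w, octu i w * ((s w).val : ZMod 24) := by
          refine Finset.sum_congr rfl fun w _ => ?_
          rw [hsv w]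
          push_cast
          ring
  have hmem : 4 ∈ {n : ℕ | ∃ D : OctV → ℤ, Divisor.Effective D ∧ octG.Winning D ∧
      Divisor.deg D = (n : ℤ)} := by
    refine ⟨octD, fun v => by fin_cases v <;> decide, ?_, by decide⟩
    intro q
    fin_cases q
    · exact ⟨_, Relation.ReflTransGen.refl, fun v => by fin_cases v <;> decide⟩
    · exact ⟨_, Relation.ReflTransGen.refl, fun v => by fin_cases v <;> decide⟩
    · exact ⟨_, Relation.ReflTransGen.refl, fun v => by fin_cases v <;> decide⟩
    · exact ⟨_, Relation.ReflTransGen.refl, fun v => by fin_cases v <;> decide⟩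
    · exact ⟨_, Relation.ReflTransGen.tail (Relation.ReflTransGen.tail
        (Relation.ReflTransGen.tail (Relation.ReflTransGen.tail
        (Relation.ReflTransGen.tail Relation.ReflTransGen.refl
          ⟨((0 : Fin 3), (0 : Fin 2)), rfl⟩) ⟨((0 : Fin 3), (1 : Fin 2)), rfl⟩)
          ⟨((1 : Fin 3), (0 : Fin 2)), rfl⟩) ⟨((1 : Fin 3), (1 : Fin 2)), rfl⟩)
          ⟨((2 : Fin 3), (1 : Fin 2)), rfl⟩, fun v => by fin_cases v <;> decide⟩
    · exact ⟨_, Relation.ReflTransGen.tail (Relation.ReflTransGen.tail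
        (Relation.ReflTransGen.tail (Relation.ReflTransGen.tail
        (Relation.ReflTransGen.tail Relation.ReflTransGen.refl
          ⟨((0 : Fin 3), (0 : Fin 2)), rfl⟩) ⟨((0 : Fin 3), (1 : Fin 2)), rfl⟩)
          ⟨((1 : Fin 3), (0 : Fin 2)), rfl⟩) ⟨((1 : Fin 3), (1 : Fin 2)), rfl⟩)
          ⟨((2 : Fin 3), (0 : Fin 2)), rfl⟩, fun v => by fin_cases v <;> decide⟩
  refine le_antisymm (Nat.sInf_le hmem) ?_
  exact hS _ (Nat.sInf_mem ⟨4, hmem⟩)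
end

section
/- For integers n_1 ≤ n_2 ≤ … ≤ n_k with k ≥ 2 and n = n_1 + n_2 + … + n_k, the gonality of the complete multipartite graph K_{n_1,n_2,…,n_k} equals n − n_k. -/
open Finset

section Helpers

namespace Multigraph

variable {V : Type} [Fintype V] [DecidableEq V] (G : Multigraph V)

/-- The change at `w` caused by firing `v`. -/
def row (v w : V) : ℤ := (G.m v w : ℤ) - if w = v then (G.val v : ℤ) else 0

lemma fire_eq (v : V) (D : V → ℤ) : G.fire v D = fun w => D w + G.row v w := by
  funext w
  simp only [fire, row]
  ring

lemma sum_row (w : V) : ∑ v, G.row v w = 0 := by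
  simp only [row, Finset.sum_sub_distrib]
  have h1 : ∑ v, ((G.m v w : ℤ)) = (G.val w : ℤ) := by
    rw [val]
    push_cast
    exact Finset.sum_congr rfl fun v _ => by rw [G.symm]
  have h2 : ∑ v, (if w = v then (G.val v : ℤ) else 0) = (G.val w : ℤ) := by
    simp
  rw [h1, h2, sub_self]

lemma equivalent_exists {D D' : V → ℤ} (h : G.Equivalent D D') :
    ∃ f : V → ℕ, ∀ w, D' w = D w + ∑ v, (f v : ℤ) * G.row v w := by
  induction h with
  | refl => exact ⟨fun _ => 0, by simp⟩
  | tail _ hstep ih =>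
    obtain ⟨f, hf⟩ := ih
    obtain ⟨v, rfl⟩ := hstep
    refine ⟨fun u => f u + if u = v then 1 else 0, fun w => ?_⟩
    rw [fire_eq]
    simp only [hf w]
    have : ∑ u, ((f u + if u = v then 1 else 0 : ℕ) : ℤ) * G.row u w
        = (∑ u, (f u : ℤ) * G.row u w) + ∑ u, (if u = v then 1 else 0 : ℤ) * G.row u w := by
      rw [← Finset.sum_add_distrib]
      refine Finset.sum_congr rfl fun u _ => ?_
      push_cast
      ring
    rw [this]
    have : ∑ u, (if u = v then 1 else 0 : ℤ) * G.row u w = G.row v w := by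
      simp [Finset.sum_ite_eq']
    rw [this]
    ring

lemma equivalent_fire_finset (s : Finset V) (D : V → ℤ) :
    G.Equivalent D (fun w => D w + ∑ v ∈ s, G.row v w) := by
  classical
  induction s using Finset.cons_induction with
  | empty => simp only [Finset.sum_empty, add_zero]; exact Relation.ReflTransGen.refl
  | cons a s ha ih =>
    refine Relation.ReflTransGen.tail ih ⟨a, ?_⟩
    rw [fire_eq]
    funext w
    rw [Finset.sum_cons]
    ring

end Multigraph

end Helpers
section MultipartiteAux

variable {k : ℕ} {n : Fin k → ℕ}

lemma mpg_m (u v : Σ i : Fin k, Fin (n i)) :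
    ((Multigraph.ofSimpleGraph (completeMultipartiteGraph' k n)).m u v : ℤ)
      = if u.1 = v.1 then 0 else 1 := by
  simp only [Multigraph.ofSimpleGraph, completeMultipartiteGraph']
  by_cases h : u.1 = v.1 <;> simp [h]

lemma sum_cluster (i : Fin k) :
    ∑ u : (Σ j : Fin k, Fin (n j)), (if u.1 = i then (0:ℤ) else 1)
      = (∑ j : Fin k, (n j : ℤ)) - n i := by
  rw [← Finset.univ_sigma_univ, Finset.sum_sigma]
  have h1 : ∀ j : Fin k, ∑ _x : Fin (n j), (if j = i then (0:ℤ) else 1)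
      = (n j : ℤ) - (if j = i then (n j : ℤ) else 0) := by
    intro j
    by_cases h : j = i <;> simp [h, Finset.card_univ]
  rw [Finset.sum_congr rfl fun j _ => h1 j, Finset.sum_sub_distrib,
    Finset.sum_ite_eq' Finset.univ i (fun j => (n j : ℤ))]
  simp

lemma mpg_val (u : Σ i : Fin k, Fin (n i)) :
    ((Multigraph.ofSimpleGraph (completeMultipartiteGraph' k n)).val u : ℤ)
      = (∑ j : Fin k, (n j : ℤ)) - n u.1 := by
  rw [Multigraph.val]
  push_cast
  rw [← sum_cluster u.1]
  refine Finset.sum_congr rfl fun w _ => ?_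
  rw [mpg_m]
  by_cases h : u.1 = w.1
  · rw [if_pos h, if_pos h.symm]
  · rw [if_neg h, if_neg fun hh => h hh.symm]

lemma mpg_card : Fintype.card (Σ i : Fin k, Fin (n i)) = ∑ i : Fin k, n i := by
  simp

lemma mpg_cut (hk : 2 ≤ k) (hpos : ∀ i, 1 ≤ n i) (hmono : Monotone n)
    (A : Finset (Σ i : Fin k, Fin (n i))) (hne : A.Nonempty) (hne' : Aᶜ.Nonempty) :
    (∑ j : Fin k, (n j : ℤ)) - n ⟨k-1, Nat.sub_lt (by omega) Nat.one_pos⟩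
      ≤ ∑ w ∈ A, ∑ v ∈ Aᶜ, ((Multigraph.ofSimpleGraph (completeMultipartiteGraph' k n)).m w v : ℤ) := by
  classical
  set iM : Fin k := ⟨k-1, Nat.sub_lt (by omega) Nat.one_pos⟩ with hiM
  by_cases hsplit : ∃ w ∈ A, ∃ v ∈ Aᶜ, w.1 = v.1
  · obtain ⟨w₀, hw₀, v₀, hv₀, hcl⟩ := hsplit
    set i := w₀.1 with hi
    -- Step 1 : the cut is at least the "star" sum
    have step1 : (∑ w ∈ A, ((Multigraph.ofSimpleGraph (completeMultipartiteGraph' k n)).m w v₀ : ℤ))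
        + ∑ v ∈ Aᶜ, ((Multigraph.ofSimpleGraph (completeMultipartiteGraph' k n)).m w₀ v : ℤ)
        ≤ ∑ w ∈ A, ∑ v ∈ Aᶜ, ((Multigraph.ofSimpleGraph (completeMultipartiteGraph' k n)).m w v : ℤ) := by
      have hinner : ∀ w ∈ A,
          ((Multigraph.ofSimpleGraph (completeMultipartiteGraph' k n)).m w v₀ : ℤ)
            + (if w = w₀ then ∑ v ∈ Aᶜ.erase v₀,
                ((Multigraph.ofSimpleGraph (completeMultipartiteGraph' k n)).m w₀ v : ℤ) else 0)
          ≤ ∑ v ∈ Aᶜ, ((Multigraph.ofSimpleGraph (completeMultipartiteGraph' k n)).m w v : ℤ) := by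
        intro w _
        rw [← Finset.add_sum_erase _ _ hv₀]
        gcongr
        by_cases h : w = w₀
        · subst h; simp
        · simp only [h, if_false]
          exact Finset.sum_nonneg fun v _ => by positivity
      calc ∑ w ∈ A, ((Multigraph.ofSimpleGraph (completeMultipartiteGraph' k n)).m w v₀ : ℤ)
              + ∑ v ∈ Aᶜ, ((Multigraph.ofSimpleGraph (completeMultipartiteGraph' k n)).m w₀ v : ℤ)
          = ∑ w ∈ A, (((Multigraph.ofSimpleGraph (completeMultipartiteGraph' k n)).m w v₀ : ℤ)
              + if w = w₀ then ∑ v ∈ Aᶜ.erase v₀,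
                ((Multigraph.ofSimpleGraph (completeMultipartiteGraph' k n)).m w₀ v : ℤ) else 0) := by
            rw [Finset.sum_add_distrib, Finset.sum_ite_eq' A w₀, if_pos hw₀]
            congr 1
            rw [← Finset.add_sum_erase _ _ hv₀]
            have : ((Multigraph.ofSimpleGraph (completeMultipartiteGraph' k n)).m w₀ v₀ : ℤ) = 0 := by
              rw [mpg_m, if_pos hcl]
            rw [this, zero_add]
        _ ≤ _ := Finset.sum_le_sum hinner
    -- Step 2 : the star sum equals N - n i
    have step2 : (∑ w ∈ A, ((Multigraph.ofSimpleGraph (completeMultipartiteGraph' k n)).m w v₀ : ℤ))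
        + ∑ v ∈ Aᶜ, ((Multigraph.ofSimpleGraph (completeMultipartiteGraph' k n)).m w₀ v : ℤ)
        = (∑ j : Fin k, (n j : ℤ)) - n i := by
      rw [← sum_cluster i, ← Finset.sum_add_sum_compl A (fun u => if u.1 = i then (0:ℤ) else 1)]
      congr 1
      · refine Finset.sum_congr rfl fun w _ => ?_
        rw [mpg_m]
        by_cases h : w.1 = i
        · rw [if_pos h, if_pos (h.trans hcl)]
        · rw [if_neg h, if_neg (fun hh : w.1 = v₀.1 => h (hh.trans hcl.symm))]
      · refine Finset.sum_congr rfl fun v _ => ?_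
        rw [mpg_m]
        by_cases h : v.1 = i
        · rw [if_pos (hi ▸ h.symm), if_pos h]
        · rw [if_neg (fun hh => h hh.symm), if_neg h]
    have hle : (n i : ℤ) ≤ n iM := by
      have : i ≤ iM := by
        rw [Fin.le_def]
        have := i.isLt
        simp only [hiM]
        omega
      exact_mod_cast hmono this
    calc (∑ j : Fin k, (n j : ℤ)) - n iM ≤ (∑ j : Fin k, (n j : ℤ)) - n i := by linarith
      _ ≤ _ := by rw [← step2] at *; linarith [step1]
  · push_neg at hsplit
    have hall : ∀ w ∈ A, ∀ v ∈ Aᶜ,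
        ((Multigraph.ofSimpleGraph (completeMultipartiteGraph' k n)).m w v : ℤ) = 1 := by
      intro w hw v hv
      rw [mpg_m, if_neg (hsplit w hw v hv)]
    have hcut : ∑ w ∈ A, ∑ v ∈ Aᶜ, ((Multigraph.ofSimpleGraph (completeMultipartiteGraph' k n)).m w v : ℤ)
        = (A.card : ℤ) * Aᶜ.card := by
      rw [Finset.sum_congr rfl fun w hw => Finset.sum_congr rfl fun v hv => hall w hw v hv]
      simp [mul_comm]
    rw [hcut]
    have ha : (1:ℤ) ≤ A.card := by exact_mod_cast Finset.card_pos.mpr hne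
    have hb : (1:ℤ) ≤ Aᶜ.card := by exact_mod_cast Finset.card_pos.mpr hne'
    have hab : (A.card : ℤ) + Aᶜ.card = ∑ j : Fin k, (n j : ℤ) := by
      have h := Finset.card_add_card_compl A
      rw [mpg_card] at h
      exact_mod_cast congrArg (Nat.cast (R := ℤ)) h
    have hm1 : (1:ℤ) ≤ n iM := by exact_mod_cast hpos iM
    nlinarith [mul_pos (by linarith : (0:ℤ) < A.card) (by linarith : (0:ℤ) < Aᶜ.card)]

end MultipartiteAux
/-- For integers `n 0 ≤ n 1 ≤ ⋯ ≤ n (k-1)` (each at least `1`) with `k ≥ 2`,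
the gonality of the complete multipartite graph `K_{n 0, …, n (k-1)}` equals
`(n 0 + ⋯ + n (k-1)) - n (k-1)`. -/
theorem gonality_completeMultipartite (k : ℕ) (hk : 2 ≤ k) (n : Fin k → ℕ)
    (hpos : ∀ i, 1 ≤ n i) (hmono : Monotone n) :
    (Multigraph.ofSimpleGraph (completeMultipartiteGraph' k n)).gonality
      = (∑ i : Fin k, n i) - n ⟨k - 1, by omega⟩ := by
  classical
  set G := Multigraph.ofSimpleGraph (completeMultipartiteGraph' k n) with hG
  set iM : Fin k := ⟨k - 1, by omega⟩ with hiM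
  set N := ∑ i : Fin k, n i with hN
  have hcast : (N : ℤ) = ∑ j : Fin k, (n j : ℤ) := by rw [hN]; push_cast; rfl
  have hmN : n iM ≤ N := Finset.single_le_sum (fun i _ => Nat.zero_le _) (Finset.mem_univ iM)
  have hN1 : n iM + 1 ≤ N := by
    have h0 : (⟨0, by omega⟩ : Fin k) ≠ iM := by
      intro h
      rw [Fin.ext_iff] at h
      simp only [hiM] at h
      omega
    have h1 : n ⟨0, by omega⟩ + n iM ≤ N := by
      rw [hN, ← Finset.sum_pair h0]
      exact Finset.sum_le_sum_of_subset (Finset.subset_univ _)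
    have := hpos ⟨0, by omega⟩
    omega
  set p : (Σ i : Fin k, Fin (n i)) := ⟨iM, ⟨0, hpos iM⟩⟩ with hp
  -- values of the graph on vertices
  have hm : ∀ u v : (Σ i : Fin k, Fin (n i)), (G.m u v : ℤ) = if u.1 = v.1 then 0 else 1 := by
    intro u v; rw [hG]; exact mpg_m u v
  have hval : ∀ u : (Σ i : Fin k, Fin (n i)), (G.val u : ℤ) = (N : ℤ) - n u.1 := by
    intro u; rw [hG, hcast]; exact mpg_val u
  have hrow : ∀ v w : (Σ i : Fin k, Fin (n i)), G.row v w
      = ((if v.1 = w.1 then 0 else 1) : ℤ) - if w = v then (N : ℤ) - n v.1 else 0 := by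
    intro v w
    rw [Multigraph.row, hm, hval]
  have hnp : n p.1 = n iM := by rw [hp]
  -- the winning divisor of degree N - n iM
  have hmem : (N - n iM) ∈ {d : ℕ | ∃ D, Divisor.Effective D ∧ G.Winning D ∧
      Divisor.deg D = (d : ℤ)} := by
    refine ⟨fun w => if w = p then ((N : ℤ) - n iM) else 0, ?_, ?_, ?_⟩
    · intro w
      dsimp only
      by_cases h : w = p
      · rw [if_pos h]; omega
      · rw [if_neg h]
    · intro q
      by_cases hq : q = p
      · -- target is p itself : already effective
        refine ⟨_, Relation.ReflTransGen.refl, fun w => ?_⟩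
        dsimp only
        by_cases h : w = p
        · rw [if_pos h, if_pos (hq ▸ h)]; omega
        · rw [if_neg h, if_neg (hq ▸ h)]
          omega
      · set E : (Σ i : Fin k, Fin (n i)) → ℤ :=
          fun w => (if w = p then ((N : ℤ) - n iM) else 0) - if w = q then 1 else 0 with hE
        by_cases hq1 : q.1 = p.1
        · -- same cluster as p : fire p, then fire everything except q
          refine ⟨fun w => E w + G.row p w - G.row q w, ?_, ?_⟩
          · have h := (G.equivalent_fire_finset {p} E).trans
              (G.equivalent_fire_finset (Finset.univ.erase q)
                (fun w => E w + ∑ v ∈ ({p} : Finset _), G.row v w))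
            unfold Multigraph.Equivalent
            convert h using 1
            funext w
            rw [Finset.sum_singleton, Finset.sum_erase_eq_sub (Finset.mem_univ q), G.sum_row]
            ring
          · intro w
            have e1 : G.row p w - G.row q w
                = (if w = q then (N : ℤ) - n iM else 0)
                  - (if w = p then (N : ℤ) - n iM else 0) := by
              rw [hrow, hrow, hq1, hnp]
              ring
            dsimp only
            rw [hE]
            dsimp only
            by_cases hwp : w = p
            · have hwq : w ≠ q := fun h' => hq ((h'.symm.trans hwp))
              simp only [if_pos hwp, if_neg hwq] at e1 ⊢
              omega
            · by_cases hwq : w = q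
              · simp only [if_neg hwp, if_pos hwq] at e1 ⊢
                omega
              · simp only [if_neg hwp, if_neg hwq] at e1 ⊢
                omega
        · -- different cluster : fire p once
          refine ⟨fun w => E w + G.row p w, ?_, ?_⟩
          · have h := G.equivalent_fire_finset {p} E
            convert h using 1
            funext w
            rw [Finset.sum_singleton]
          · intro w
            dsimp only
            rw [hE]
            dsimp only
            rw [hrow p w, hnp]
            by_cases hwp : w = p
            · have hwq : w ≠ q := fun h' => hq1 (congrArg Sigma.fst (h'.symm.trans hwp))
              have h2 : p.1 = w.1 := by rw [hwp]
              simp only [if_pos hwp, if_neg hwq, if_pos h2]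
              omega
            · by_cases hwq : w = q
              · have h2 : ¬ p.1 = w.1 := fun h' => hq1 (hwq ▸ h'.symm)
                simp only [if_neg hwp, if_pos hwq, if_neg h2]
                omega
              · simp only [if_neg hwp, if_neg hwq]
                by_cases h2 : p.1 = w.1
                · simp only [if_pos h2]; omega
                · simp only [if_neg h2]; omega
    · -- degree
      dsimp only [Divisor.deg]
      rw [Finset.sum_ite_eq' Finset.univ p, if_pos (Finset.mem_univ p)]
      omega
  -- lower bound
  have hlb : ∀ d ∈ {d : ℕ | ∃ D, Divisor.Effective D ∧ G.Winning D ∧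
      Divisor.deg D = (d : ℤ)}, N - n iM ≤ d := by
    rintro d ⟨D, hDeff, hDwin, hDdeg⟩
    have hsuff : (N : ℤ) - n iM ≤ d := by
      by_cases hall : ∀ q, 1 ≤ D q
      · -- D has at least one chip everywhere
        have hcard : ((Fintype.card (Σ i : Fin k, Fin (n i)) : ℤ)) ≤ Divisor.deg D := by
          rw [Divisor.deg]
          calc ((Fintype.card (Σ i : Fin k, Fin (n i)) : ℤ))
              = ∑ _v : (Σ i : Fin k, Fin (n i)), (1 : ℤ) := by
                simp [Finset.card_univ]
            _ ≤ ∑ v, D v := Finset.sum_le_sum fun v _ => hall v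
        rw [hDdeg] at hcard
        rw [mpg_card] at hcard
        have : (0:ℤ) ≤ (n iM : ℤ) := by positivity
        rw [← hN] at hcard
        linarith
      · push_neg at hall
        obtain ⟨q, hq⟩ := hall
        obtain ⟨D', hequiv, heff⟩ := hDwin q
        obtain ⟨f, hf⟩ := G.equivalent_exists hequiv
        obtain ⟨b, -, hb⟩ := Finset.exists_max_image Finset.univ f ⟨p, Finset.mem_univ p⟩
        set t := f b with ht
        set A : Finset (Σ i : Fin k, Fin (n i)) := Finset.univ.filter (fun v => f v = t)
          with hA
        have hbA : b ∈ A := by simp [hA, ht]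
        have hfA : ∀ w ∈ A, f w = t := by
          intro w hw; simpa [hA] using hw
        have hfAc : ∀ v ∈ Aᶜ, (f v : ℤ) ≤ (t : ℤ) - 1 := by
          intro v hv
          simp only [hA, Finset.mem_compl, Finset.mem_filter, Finset.mem_univ,
            true_and] at hv
          have h1 : f v ≤ t := hb v (Finset.mem_univ v)
          have : f v < t := lt_of_le_of_ne h1 hv
          omega
        -- the Laplacian rearrangement
        have key2 : ∀ w, ∑ v, (f v : ℤ) * G.row v w
            = ∑ v, (G.m w v : ℤ) * ((f v : ℤ) - f w) := by
          intro w
          simp only [Multigraph.row, mul_sub]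
          rw [Finset.sum_sub_distrib]
          have e1 : ∑ v, (f v : ℤ) * (if w = v then (G.val v : ℤ) else 0)
              = (f w : ℤ) * G.val w := by
            simp [mul_ite]
          have e2 : ∑ v, (f v : ℤ) * (G.m v w : ℤ) = ∑ v, (f v : ℤ) * (G.m w v : ℤ) := by
            refine Finset.sum_congr rfl fun v _ => by rw [G.symm]
          have e3 : ((G.val w : ℤ)) = ∑ v, (G.m w v : ℤ) := by
            rw [Multigraph.val]; push_cast; rfl
          rw [e1, e2, e3, Finset.mul_sum]
          rw [Finset.sum_sub_distrib]
          refine congrArg₂ (· - ·) (Finset.sum_congr rfl fun v _ => by ring)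
            (Finset.sum_congr rfl fun v _ => by ring)
        by_cases hAc : Aᶜ.Nonempty
        · -- nonconstant case : use the cut bound
          set cut := ∑ w ∈ A, ∑ v ∈ Aᶜ, (G.m w v : ℤ) with hcut
          have hanti : ∑ w ∈ A, ∑ v ∈ A, (G.m w v : ℤ) * ((f v : ℤ) - f w) = 0 := by
            have hcomm := Finset.sum_comm (s := A) (t := A)
              (f := fun w v => (G.m w v : ℤ) * ((f v : ℤ) - f w))
            have hneg : ∑ v ∈ A, ∑ w ∈ A, (G.m w v : ℤ) * ((f v : ℤ) - f w)
                = - ∑ v ∈ A, ∑ w ∈ A, (G.m v w : ℤ) * ((f w : ℤ) - f v) := by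
              rw [← Finset.sum_neg_distrib]
              refine Finset.sum_congr rfl fun v _ => ?_
              rw [← Finset.sum_neg_distrib]
              refine Finset.sum_congr rfl fun w _ => ?_
              rw [G.symm]
              ring
            rw [hneg] at hcomm
            linarith
          have hpart : ∀ w ∈ A, ∑ v, (G.m w v : ℤ) * ((f v : ℤ) - f w)
              = (∑ v ∈ A, (G.m w v : ℤ) * ((f v : ℤ) - f w))
                + ∑ v ∈ Aᶜ, (G.m w v : ℤ) * ((f v : ℤ) - f w) := by
            intro w _
            rw [Finset.sum_add_sum_compl]
          have hbound : ∑ w ∈ A, ∑ v ∈ Aᶜ, (G.m w v : ℤ) * ((f v : ℤ) - f w) ≤ - cut := by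
            rw [hcut, ← Finset.sum_neg_distrib]
            refine Finset.sum_le_sum fun w hw => ?_
            rw [← Finset.sum_neg_distrib]
            refine Finset.sum_le_sum fun v hv => ?_
            have h1 : ((f v : ℤ)) - f w ≤ -1 := by
              have := hfAc v hv
              rw [hfA w hw] at *
              linarith
            have h2 : (0:ℤ) ≤ (G.m w v : ℤ) := by positivity
            nlinarith
          have hsumA : cut ≤ ∑ w ∈ A, D w := by
            have h0 : (0:ℤ) ≤ ∑ w ∈ A, D' w := Finset.sum_nonneg fun w _ => heff w
            have h1 : ∑ w ∈ A, D' w = (∑ w ∈ A, (D w - if w = q then 1 else 0))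
                + ∑ w ∈ A, ∑ v, (G.m w v : ℤ) * ((f v : ℤ) - f w) := by
              rw [← Finset.sum_add_distrib]
              refine Finset.sum_congr rfl fun w _ => ?_
              rw [hf w, key2 w]
            have h2 : ∑ w ∈ A, ∑ v, (G.m w v : ℤ) * ((f v : ℤ) - f w) ≤ - cut := by
              calc ∑ w ∈ A, ∑ v, (G.m w v : ℤ) * ((f v : ℤ) - f w)
                  = (∑ w ∈ A, ∑ v ∈ A, (G.m w v : ℤ) * ((f v : ℤ) - f w))
                    + ∑ w ∈ A, ∑ v ∈ Aᶜ, (G.m w v : ℤ) * ((f v : ℤ) - f w) := by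
                    rw [← Finset.sum_add_distrib]
                    exact Finset.sum_congr rfl hpart
                _ = ∑ w ∈ A, ∑ v ∈ Aᶜ, (G.m w v : ℤ) * ((f v : ℤ) - f w) := by
                    rw [hanti, zero_add]
                _ ≤ - cut := hbound
            have h3 : ∑ w ∈ A, (D w - if w = q then 1 else 0) ≤ ∑ w ∈ A, D w := by
              refine Finset.sum_le_sum fun w _ => ?_
              by_cases h : w = q <;> simp [h]
            linarith
          have hcutlb : (N : ℤ) - n iM ≤ cut := by
            rw [hcut, hcast]
            have := mpg_cut hk hpos hmono A ⟨b, hbA⟩ hAc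
            rw [← hG] at this
            convert this using 3
          have hAle : ∑ w ∈ A, D w ≤ Divisor.deg D := by
            rw [Divisor.deg]
            exact Finset.sum_le_sum_of_subset_of_nonneg (Finset.subset_univ A)
              fun w _ _ => hDeff w
          rw [hDdeg] at hAle
          linarith
        · -- f is constant : impossible since D q < 1
          exfalso
          have hconst : ∀ v, f v = t := by
            intro v
            by_contra h
            exact hAc ⟨v, by simp [hA, h]⟩
          have hzero : ∀ w, ∑ v, (f v : ℤ) * G.row v w = 0 := by
            intro w
            have : ∀ v, (f v : ℤ) * G.row v w = (t : ℤ) * G.row v w := by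
              intro v; rw [hconst v]
            rw [Finset.sum_congr rfl fun v _ => this v, ← Finset.mul_sum, G.sum_row,
              mul_zero]
          have := heff q
          rw [hf q, hzero q] at this
          simp at this
          omega
    have hd0 : (0:ℤ) ≤ d := Int.natCast_nonneg d
    omega
  rw [Multigraph.gonality]
  exact le_antisymm (Nat.sInf_le hmem) (le_csInf ⟨_, hmem⟩ hlb)
end

section
/- The gonality of the cube graph Q_3 equals 4. -/
open Finset

namespace GonCube

abbrev V : Type := Fin 3 → Bool

abbrev G : Multigraph V := Multigraph.ofSimpleGraph cubeGraph

def divOf {n : ℕ} (t : Fin n → V) : V → ℤ := fun v => ∑ i, if t i = v then 1 else 0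

/-- Apply a list of firings. -/
def fireList : List V → (V → ℤ) → (V → ℤ)
  | [], D => D
  | v :: l, D => fireList l (G.fire v D)

lemma equivalent_fireList (l : List V) (D : V → ℤ) : G.Equivalent D (fireList l D) := by
  induction l generalizing D with
  | nil => exact Relation.ReflTransGen.refl
  | cons v l ih => exact Relation.ReflTransGen.head ⟨v, rfl⟩ (ih (G.fire v D))

section Pairing

variable {R : Type} [CommRing R]

def pairing (f : V → R) (D : V → ℤ) : R := ∑ v, f v * ((D v : ℤ) : R)

lemma pairing_fire (f : V → R)
    (hf : ∀ v : V, ∑ w, f w * ((G.m v w : ℕ) : R) = f v * ((G.val v : ℕ) : R))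
    (v : V) (D : V → ℤ) : pairing f (G.fire v D) = pairing f D := by
  unfold pairing Multigraph.fire
  have key : ∀ w : V, f w * (((D w + (G.m v w : ℤ) - if w = v then (G.val v : ℤ) else 0) : ℤ) : R)
      = f w * ((D w : ℤ) : R) + f w * ((G.m v w : ℕ) : R)
        - (if w = v then f w * ((G.val v : ℕ) : R) else 0) := by
    intro w
    by_cases h : w = v <;> simp [h] <;> push_cast <;> ring
  rw [Finset.sum_congr rfl fun w _ => key w]
  rw [Finset.sum_sub_distrib, Finset.sum_add_distrib, Finset.sum_ite_eq' Finset.univ v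
    (fun w => f w * ((G.val v : ℕ) : R))]
  simp [hf v]

lemma pairing_equiv (f : V → R)
    (hf : ∀ v : V, ∑ w, f w * ((G.m v w : ℕ) : R) = f v * ((G.val v : ℕ) : R))
    {D D' : V → ℤ} (h : G.Equivalent D D') : pairing f D' = pairing f D := by
  induction h with
  | refl => rfl
  | tail _ step ih =>
    obtain ⟨v, rfl⟩ := step
    rw [pairing_fire f hf, ih]

lemma pairing_divOf (f : V → R) {n : ℕ} (t : Fin n → V) :
    pairing f (divOf t) = ∑ i, f (t i) := by
  unfold pairing divOf
  have : ∀ v : V, f v * (((∑ i, if t i = v then (1:ℤ) else 0) : ℤ) : R)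
      = ∑ i, if t i = v then f v else 0 := by
    intro v
    push_cast
    rw [Finset.mul_sum]
    refine Finset.sum_congr rfl fun i _ => ?_
    by_cases h : t i = v <;> simp [h]
  rw [Finset.sum_congr rfl fun v _ => this v, Finset.sum_comm]
  refine Finset.sum_congr rfl fun i _ => ?_
  simp [Finset.sum_ite_eq]

lemma pairing_sub_single (f : V → R) (D : V → ℤ) (q : V) :
    pairing f (fun w => D w - if w = q then 1 else 0) = pairing f D - f q := by
  unfold pairing
  have : ∀ v : V, f v * (((D v - if v = q then (1:ℤ) else 0) : ℤ) : R)
      = f v * ((D v : ℤ) : R) - (if v = q then f v else 0) := by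
    intro v
    by_cases h : v = q <;> simp [h] <;> push_cast <;> ring
  rw [Finset.sum_congr rfl fun v _ => this v, Finset.sum_sub_distrib]
  simp [Finset.sum_ite_eq']

end Pairing

lemma deg_fire (v : V) (D : V → ℤ) : Divisor.deg (G.fire v D) = Divisor.deg D := by
  unfold Divisor.deg Multigraph.fire
  rw [Finset.sum_sub_distrib, Finset.sum_add_distrib, Finset.sum_ite_eq' Finset.univ v
    (fun _ => (G.val v : ℤ))]
  have hval : ∑ w : V, ((G.m v w : ℤ)) = (G.val v : ℤ) := by
    unfold Multigraph.val; push_cast; rfl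
  simp [hval]

lemma deg_equiv {D D' : V → ℤ} (h : G.Equivalent D D') : Divisor.deg D' = Divisor.deg D := by
  induction h with
  | refl => rfl
  | tail _ step ih => obtain ⟨v, rfl⟩ := step; rw [deg_fire, ih]

lemma equiv_add {D D' : V → ℤ} (Δ : V → ℤ) (h : G.Equivalent D D') :
    G.Equivalent (fun w => D w + Δ w) (fun w => D' w + Δ w) := by
  refine Relation.ReflTransGen.lift (fun (A : V → ℤ) => fun w => A w + Δ w) ?_ _ _ h
  rintro A B ⟨v, rfl⟩
  refine ⟨v, ?_⟩
  funext w
  unfold Multigraph.fire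
  ring

lemma deg_divOf {n : ℕ} (t : Fin n → V) : Divisor.deg (divOf t) = n := by
  unfold Divisor.deg divOf
  rw [Finset.sum_comm]
  simp [Finset.sum_ite_eq]

lemma exists_rep : ∀ (n : ℕ) (D : V → ℤ), Divisor.Effective D → Divisor.deg D = n →
    ∃ t : Fin n → V, D = divOf t := by
  intro n
  induction n with
  | zero =>
    intro D hE hd
    refine ⟨fun i => i.elim0, ?_⟩
    funext v
    have h0 := (Finset.sum_eq_zero_iff_of_nonneg (fun v _ => hE v)).mp (by exact_mod_cast hd)
    simp [divOf, h0 v (Finset.mem_univ v)]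
  | succ n ih =>
    intro D hE hd
    have hex : ∃ v, 0 < D v := by
      by_contra h
      push_neg at h
      have hz : ∀ v ∈ Finset.univ, D v = 0 := fun v _ => le_antisymm (h v) (hE v)
      rw [Divisor.deg, Finset.sum_eq_zero hz] at hd
      omega
    obtain ⟨v0, hv0⟩ := hex
    have hE' : Divisor.Effective (fun v => D v - if v = v0 then 1 else 0) := by
      intro v
      have h1 := hE v
      by_cases h : v = v0
      · simp only [h, if_pos rfl]
        subst h
        omega
      · simp only [if_neg h]
        omega
    have hd' : Divisor.deg (fun v => D v - if v = v0 then 1 else 0) = n := by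
      unfold Divisor.deg at hd ⊢
      rw [Finset.sum_sub_distrib]
      simp only [Finset.sum_ite_eq', Finset.mem_univ, if_true]
      omega
    obtain ⟨t', ht'⟩ := ih _ hE' hd'
    refine ⟨Fin.cons v0 t', ?_⟩
    funext v
    have h2 := congrFun ht' v
    have : divOf (Fin.cons v0 t') v = (if v0 = v then (1:ℤ) else 0) + divOf t' v := by
      unfold divOf
      rw [Fin.sum_univ_succ]
      simp
    rw [this, ← h2]
    by_cases h : v = v0
    · subst h; simp
    · rw [if_neg (fun hh => h hh.symm), if_neg h]; ring

/-! Invariants mod 2 and mod 24. -/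

def f2 : V → ZMod 2 := fun v =>
  match v 0, v 1, v 2 with
  | false, false, false => 1
  | false, false, true => 0
  | false, true, false => 1
  | false, true, true => 1
  | true, false, false => 0
  | true, false, true => 0
  | true, true, false => 1
  | true, true, true => 0

def f24 : V → ZMod 24 := fun v =>
  match v 0, v 1, v 2 with
  | false, false, false => 4
  | false, false, true => 3
  | false, true, false => 9
  | false, true, true => 4
  | true, false, false => 0
  | true, false, true => 1
  | true, true, false => 19
  | true, true, true => 0

lemma hf2 : ∀ v : V, ∑ w, f2 w * ((G.m v w : ℕ) : ZMod 2) = f2 v * ((G.val v : ℕ) : ZMod 2) := by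
  decide

lemma hf24 : ∀ v : V, ∑ w, f24 w * ((G.m v w : ℕ) : ZMod 24) = f24 v * ((G.val v : ℕ) : ZMod 24) := by
  decide

def allowed : List (ZMod 2 × ZMod 24) :=
  [(0, 0), (0, 1), (0, 2), (0, 3), (0, 4), (0, 6), (0, 8), (0, 13), (0, 14), (0, 18), (0, 23),
   (1, 4), (1, 5), (1, 7), (1, 9), (1, 10), (1, 12), (1, 19), (1, 20), (1, 22)]

lemma core : ∀ a b c : V, ∃ q : V,
    (f2 a + f2 b + f2 c - f2 q, f24 a + f24 b + f24 c - f24 q) ∉ allowed := by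
  decide

lemma allS : ∀ a b : V, (f2 a + f2 b, f24 a + f24 b) ∈ allowed := by
  decide

lemma no_win3 (D : V → ℤ) (hD : Divisor.Effective D) (hdeg : Divisor.deg D = 3) :
    ¬ G.Winning D := by
  intro hw
  obtain ⟨t, rfl⟩ := exists_rep 3 D hD (by exact_mod_cast hdeg)
  obtain ⟨q, hq⟩ := core (t 0) (t 1) (t 2)
  obtain ⟨D', hEq, hEff⟩ := hw q
  have hdeg' : Divisor.deg D' = 2 := by
    have h1 := deg_equiv hEq
    have h2 : Divisor.deg (fun w => divOf t w - if w = q then 1 else 0)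
        = Divisor.deg (divOf t) - 1 := by
      unfold Divisor.deg
      rw [Finset.sum_sub_distrib]
      simp [Finset.sum_ite_eq']
    rw [h1, h2, deg_divOf]
    norm_num
  obtain ⟨s, rfl⟩ := exists_rep 2 D' hEff (by exact_mod_cast hdeg')
  have h2 := pairing_equiv f2 hf2 hEq
  have h24 := pairing_equiv f24 hf24 hEq
  rw [pairing_divOf, pairing_sub_single, pairing_divOf] at h2 h24
  rw [Fin.sum_univ_three] at h2 h24
  rw [Fin.sum_univ_two] at h2 h24
  apply hq
  rw [← h2, ← h24]
  exact allS (s 0) (s 1)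

/-! Upper bound: a winning divisor of degree 4. -/

def D4 : V → ℤ := fun v => if v 2 = false then 1 else 0

def faceList : List V :=
  [![false, false, false], ![false, true, false], ![true, false, false], ![true, true, false]]

def seq (q : V) : List V := if q 2 = true then faceList else []

lemma win4 : G.Winning D4 := by
  intro q
  refine ⟨fireList (seq q) (fun w => D4 w - if w = q then 1 else 0),
    equivalent_fireList _ _, ?_⟩
  revert q
  unfold Divisor.Effective
  decide

end GonCube

/-- The gonality of the cube graph `Q_3` equals `4`. -/
theorem gonality_cube :
    (Multigraph.ofSimpleGraph cubeGraph).gonality = 4 := by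
  have h4mem : 4 ∈ {n : ℕ | ∃ D : GonCube.V → ℤ, Divisor.Effective D ∧
      (Multigraph.ofSimpleGraph cubeGraph).Winning D ∧ Divisor.deg D = (n : ℤ)} := by
    exact ⟨GonCube.D4, by unfold Divisor.Effective; decide, GonCube.win4, by decide⟩
  have hlow : ∀ n ∈ {n : ℕ | ∃ D : GonCube.V → ℤ, Divisor.Effective D ∧
      (Multigraph.ofSimpleGraph cubeGraph).Winning D ∧ Divisor.deg D = (n : ℤ)}, 4 ≤ n := by
    rintro n ⟨D, hEff, hWin, hdeg⟩
    by_contra hn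
    push_neg at hn
    have hn3 : n ≤ 3 := by omega
    set v0 : GonCube.V := fun _ => false with hv0
    set Δ : GonCube.V → ℤ := fun v => (3 - (n : ℤ)) * (if v = v0 then 1 else 0) with hΔ
    have hΔnn : ∀ v, 0 ≤ Δ v := by
      intro v
      have : (0:ℤ) ≤ 3 - (n:ℤ) := by omega
      by_cases h : v = v0 <;> simp [hΔ, h] <;> omega
    have hD3eff : Divisor.Effective (fun v => D v + Δ v) := fun v =>
      add_nonneg (hEff v) (hΔnn v)
    have hD3deg : Divisor.deg (fun v => D v + Δ v) = 3 := by
      unfold Divisor.deg at hdeg ⊢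
      rw [Finset.sum_add_distrib, hdeg]
      have : ∑ v : GonCube.V, Δ v = 3 - (n:ℤ) := by
        rw [hΔ, ← Finset.mul_sum, Finset.sum_ite_eq' Finset.univ v0 (fun _ => (1:ℤ))]
        simp
      rw [this]; ring
    have hD3win : (Multigraph.ofSimpleGraph cubeGraph).Winning (fun v => D v + Δ v) := by
      intro q
      obtain ⟨E, hE, hEeff⟩ := hWin q
      refine ⟨fun w => E w + Δ w, ?_, fun v => add_nonneg (hEeff v) (hΔnn v)⟩
      have := GonCube.equiv_add Δ hE
      have heq : (fun w => (D w + Δ w) - if w = q then 1 else 0)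
          = fun w => (D w - if w = q then 1 else 0) + Δ w := by
        funext w; ring
      rw [heq]
      exact this
    exact GonCube.no_win3 _ hD3eff hD3deg hD3win
  have hne : {n : ℕ | ∃ D : GonCube.V → ℤ, Divisor.Effective D ∧
      (Multigraph.ofSimpleGraph cubeGraph).Winning D ∧ Divisor.deg D = (n : ℤ)}.Nonempty :=
    ⟨4, h4mem⟩
  exact le_antisymm (Nat.sInf_le h4mem) (hlow _ (Nat.sInf_mem hne))
end

section
/- For finite connected loopless multigraphs G and H, the Cartesian product G □ H satisfies gon(G □ H) ≤ |V(G)| · gon(H) and gon(G □ H) ≤ |V(H)| · gon(G). -/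
open Finset

/-- The Cartesian product of two multigraphs: an edge between `(g, h)` and
`(g', h')` for each edge of `G` between `g` and `g'` when `h = h'`, and for
each edge of `H` between `h` and `h'` when `g = g'`. -/
def Multigraph.cartesianProduct {V W : Type} [Fintype V] [DecidableEq V]
    [Fintype W] [DecidableEq W] (G : Multigraph V) (H : Multigraph W) :
    Multigraph (V × W) where
  m p q := (if p.2 = q.2 then G.m p.1 q.1 else 0) +
    (if p.1 = q.1 then H.m p.2 q.2 else 0)
  symm := by
    intro p q
    show (if p.2 = q.2 then G.m p.1 q.1 else 0) + (if p.1 = q.1 then H.m p.2 q.2 else 0)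
        = (if q.2 = p.2 then G.m q.1 p.1 else 0) + (if q.1 = p.1 then H.m q.2 p.2 else 0)
    rw [G.symm p.1 q.1, H.symm p.2 q.2]
    congr 1
    · rcases eq_or_ne p.2 q.2 with e | e
      · rw [if_pos e, if_pos e.symm]
      · rw [if_neg e, if_neg fun h => e h.symm]
    · rcases eq_or_ne p.1 q.1 with e | e
      · rw [if_pos e, if_pos e.symm]
      · rw [if_neg e, if_neg fun h => e h.symm]
  loopless := by
    intro p
    simp [G.loopless, H.loopless]

section Aux

variable {V W : Type} [Fintype V] [DecidableEq V] [Fintype W] [DecidableEq W]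

/-- Firing adds a fixed vector, so equivalence is preserved by adding a divisor. -/
lemma Multigraph.equivalent_add {G : Multigraph V} {A B : V → ℤ}
    (h : G.Equivalent A B) (F : V → ℤ) :
    G.Equivalent (fun w => A w + F w) (fun w => B w + F w) := by
  induction h with
  | refl => exact Relation.ReflTransGen.refl
  | tail hs hstep ih =>
    obtain ⟨v, rfl⟩ := hstep
    refine ih.tail ⟨v, funext fun w => ?_⟩
    simp only [Multigraph.fire]
    ring

/-- Valence of a vertex in a Cartesian product. -/
lemma Multigraph.cartesianProduct_val (G : Multigraph V) (H : Multigraph W)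
    (v : V) (w : W) :
    (G.cartesianProduct H).val (v, w) = G.val v + H.val w := by
  simp only [Multigraph.val, Multigraph.cartesianProduct, Fintype.sum_prod_type,
    Finset.sum_add_distrib, Finset.sum_ite_eq, Finset.sum_ite_eq',
    Finset.mem_univ, if_pos]
  simp [Multigraph.val]

/-- Firing an entire "column" `V × {w₀}` of the Cartesian product simulates
firing `w₀` in `H`, on every row simultaneously. -/
lemma Multigraph.column_fire (G : Multigraph V) (H : Multigraph W) (w0 : W)
    (D : V × W → ℤ) :
    (G.cartesianProduct H).Equivalent D
      (fun p => D p + ((H.m w0 p.2 : ℤ) - if p.2 = w0 then (H.val w0 : ℤ) else 0)) := by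
  set P := G.cartesianProduct H with hP
  set c : V → V × W → ℤ := fun v p =>
    (P.m (v, w0) p : ℤ) - if p = (v, w0) then (P.val (v, w0) : ℤ) else 0 with hc
  have hS : ∀ S : Finset V, P.Equivalent D (fun p => D p + ∑ v ∈ S, c v p) := by
    intro S
    induction S using Finset.induction with
    | empty =>
      have : (fun p => D p + ∑ v ∈ (∅ : Finset V), c v p) = D := funext fun p => by simp
      rw [this]
      exact Relation.ReflTransGen.refl
    | @insert a S' hnotmem ih =>
      refine ih.tail ⟨(a, w0), funext fun p => ?_⟩
      rw [Finset.sum_insert hnotmem]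
      simp only [Multigraph.fire, hc]
      ring
  have hsum : ∀ p : V × W, ∑ v, c v p
      = (H.m w0 p.2 : ℤ) - if p.2 = w0 then (H.val w0 : ℤ) else 0 := by
    rintro ⟨v', w'⟩
    simp only [hc]
    rw [Finset.sum_sub_distrib]
    have h1 : ∑ v, (P.m (v, w0) (v', w') : ℤ)
        = (if w0 = w' then (G.val v' : ℤ) else 0) + (H.m w0 w' : ℤ) := by
      simp only [hP, Multigraph.cartesianProduct]
      push_cast
      rw [Finset.sum_add_distrib]
      congr 1
      · by_cases h : w0 = w'
        · simp only [if_pos h]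
          have : ∀ v : V, (G.m v v' : ℤ) = (G.m v' v : ℤ) := fun v => by rw [G.symm]
          rw [Finset.sum_congr rfl fun v _ => this v]
          simp [Multigraph.val]
        · simp [h]
      · simp
    have h2 : ∑ v, (if (v', w') = (v, w0) then (P.val (v, w0) : ℤ) else 0)
        = if w' = w0 then (G.val v' : ℤ) + (H.val w0 : ℤ) else 0 := by
      have : ∀ v : V, (if (v', w') = (v, w0) then (P.val (v, w0) : ℤ) else 0)
          = if w' = w0 then (if v' = v then (P.val (v, w0) : ℤ) else 0) else 0 := by
        intro v
        by_cases h : w' = w0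
        · by_cases h' : v' = v
          · simp [h, h', Prod.ext_iff]
          · simp [Prod.ext_iff, h, h']
        · simp [Prod.ext_iff, h]
      rw [Finset.sum_congr rfl fun v _ => this v]
      by_cases h : w' = w0
      · simp only [if_pos h]
        rw [Finset.sum_ite_eq Finset.univ v' (fun v => (P.val (v, w0) : ℤ))]
        simp [hP, Multigraph.cartesianProduct_val G H v' w0]
      · simp [h]
    rw [h1, h2]
    by_cases h : w' = w0
    · subst h
      simp [H.loopless]
    · have h' : ¬ (w0 = w') := fun e => h e.symm
      simp [h, h']
  refine (hS Finset.univ).trans ?_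
  have : (fun p => D p + ∑ v, c v p)
      = fun p => D p + ((H.m w0 p.2 : ℤ) - if p.2 = w0 then (H.val w0 : ℤ) else 0) :=
    funext fun p => by rw [hsum p]
  rw [this]

/-- Lifting an equivalence of divisors on `H` to the Cartesian product. -/
lemma Multigraph.lift_equivalent (G : Multigraph V) (H : Multigraph W)
    {A B : W → ℤ} (h : H.Equivalent A B) :
    (G.cartesianProduct H).Equivalent (fun p => A p.2) (fun p => B p.2) := by
  induction h with
  | refl => exact Relation.ReflTransGen.refl
  | @tail C B' hs hstep ih =>
    obtain ⟨w0, rfl⟩ := hstep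
    refine ih.trans ?_
    have key := Multigraph.column_fire G H w0 (fun p : V × W => C p.2)
    have heq : (fun p : V × W => C p.2 + ((H.m w0 p.2 : ℤ)
          - if p.2 = w0 then (H.val w0 : ℤ) else 0))
        = fun p : V × W => (H.fire w0 C) p.2 := by
      funext p
      simp only [Multigraph.fire]
      ring
    rw [heq] at key
    exact key

/-- Existence of a minimizing divisor: the gonality is attained. -/
lemma Multigraph.exists_gonality_witness (G : Multigraph V) :
    ∃ D : V → ℤ, Divisor.Effective D ∧ G.Winning D ∧
      Divisor.deg D = (G.gonality : ℤ) := by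
  have hne : {n : ℕ | ∃ D : V → ℤ, Divisor.Effective D ∧ G.Winning D ∧
      Divisor.deg D = (n : ℤ)}.Nonempty := by
    refine ⟨Fintype.card V, fun _ => 1, fun v => one_pos.le, ?_, ?_⟩
    · intro q
      refine ⟨_, Relation.ReflTransGen.refl, fun v => ?_⟩
      by_cases h : v = q <;> simp [h]
    · simp [Divisor.deg]
  exact Nat.sInf_mem hne

/-- Upper bound on gonality from an explicit winning divisor. -/
lemma Multigraph.gonality_le_of_winning (G : Multigraph V) {D : V → ℤ} {n : ℕ}
    (hE : Divisor.Effective D) (hW : G.Winning D) (hd : Divisor.deg D = (n : ℤ)) :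
    G.gonality ≤ n :=
  Nat.sInf_le ⟨D, hE, hW, hd⟩

/-- Lifting a winning divisor on `H` row-constantly to the product wins there. -/
lemma Multigraph.lift_winning (G : Multigraph V) (H : Multigraph W)
    {D : W → ℤ} (hW : H.Winning D) :
    (G.cartesianProduct H).Winning (fun p => D p.2) := by
  rintro ⟨v0, w0⟩
  obtain ⟨E, hEq, hEeff⟩ := hW w0
  set F : V × W → ℤ := fun p =>
    (if p.2 = w0 then (1 : ℤ) else 0) - (if p = (v0, w0) then (1 : ℤ) else 0) with hF
  have hFnn : ∀ p, 0 ≤ F p := by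
    intro p
    by_cases h : p = (v0, w0)
    · subst h; simp [hF]
    · by_cases h2 : p.2 = w0 <;> simp [hF, h, h2]
  refine ⟨fun p => E p.2 + F p, ?_, fun p => add_nonneg (hEeff p.2) (hFnn p)⟩
  have hstart : (fun p : V × W => (fun w => D w - if w = w0 then (1 : ℤ) else 0) p.2 + F p)
      = fun p : V × W => D p.2 - if p = (v0, w0) then (1 : ℤ) else 0 := by
    funext p
    simp only [hF]
    ring
  have h1 := Multigraph.equivalent_add (Multigraph.lift_equivalent G H hEq) F
  rw [hstart] at h1
  exact h1

/-- Degree of a row-constant lift. -/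
lemma Divisor.deg_lift (D : W → ℤ) :
    Divisor.deg (fun p : V × W => D p.2) = (Fintype.card V : ℤ) * Divisor.deg D := by
  simp only [Divisor.deg, Fintype.sum_prod_type]
  rw [Finset.sum_const, Finset.card_univ, nsmul_eq_mul]

/-- The key bound: `gon(G □ H) ≤ |V(G)| · gon(H)`. -/
lemma Multigraph.gonality_cartesianProduct_le_left (G : Multigraph V) (H : Multigraph W) :
    (G.cartesianProduct H).gonality ≤ Fintype.card V * H.gonality := by
  obtain ⟨D, hEff, hWin, hdeg⟩ := H.exists_gonality_witness
  refine (G.cartesianProduct H).gonality_le_of_winning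
    (D := fun p => D p.2) (fun p => hEff p.2) (G.lift_winning H hWin) ?_
  rw [Divisor.deg_lift, hdeg]
  push_cast
  ring

/-- Gonality is monotone under multigraph isomorphism. -/
lemma Multigraph.gonality_le_of_iso (e : V ≃ W) (G1 : Multigraph V) (G2 : Multigraph W)
    (hm : ∀ a b, G1.m a b = G2.m (e a) (e b)) :
    G1.gonality ≤ G2.gonality := by
  obtain ⟨D, hEff, hWin, hdeg⟩ := G2.exists_gonality_witness
  have hval : ∀ a, G1.val a = G2.val (e a) := by
    intro a
    rw [Multigraph.val, Multigraph.val, Finset.sum_congr rfl fun w _ => hm a w]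
    exact Fintype.sum_equiv e _ _ fun w => rfl
  have hfire : ∀ (b : W) (X : W → ℤ),
      (fun a => G2.fire b X (e a)) = G1.fire (e.symm b) (fun a => X (e a)) := by
    intro b X
    funext a
    simp only [Multigraph.fire]
    rw [hm (e.symm b) a, e.apply_symm_apply, hval (e.symm b), e.apply_symm_apply]
    congr 2
    exact propext (e.eq_symm_apply).symm
  have hequiv : ∀ {X Y : W → ℤ}, G2.Equivalent X Y →
      G1.Equivalent (fun a => X (e a)) (fun a => Y (e a)) := by
    intro X Y h
    induction h with
    | refl => exact Relation.ReflTransGen.refl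
    | @tail C B' hs hstep ih =>
      obtain ⟨b, rfl⟩ := hstep
      exact ih.tail ⟨e.symm b, (hfire b C).symm ▸ rfl⟩
  refine G1.gonality_le_of_winning (D := fun a => D (e a)) (fun a => hEff (e a)) ?_ ?_
  · intro q
    obtain ⟨E, hEq, hEe⟩ := hWin (e q)
    refine ⟨fun a => E (e a), ?_, fun a => hEe (e a)⟩
    have := hequiv hEq
    have hstart : (fun a => (fun w => D w - if w = e q then (1 : ℤ) else 0) (e a))
        = fun a => D (e a) - if a = q then (1 : ℤ) else 0 := by
      funext a
      simp [EmbeddingLike.apply_eq_iff_eq]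
    rwa [hstart] at this
  · rw [← hdeg]
    exact Fintype.sum_equiv e _ _ fun a => rfl

end Aux

/-- For finite connected loopless multigraphs `G` and `H`, the Cartesian
product `G □ H` satisfies `gon(G □ H) ≤ |V(G)| ⬝ gon(H)` and
`gon(G □ H) ≤ |V(H)| ⬝ gon(G)`. -/
theorem gonality_cartesianProduct_le {V W : Type} [Fintype V] [DecidableEq V]
    [Fintype W] [DecidableEq W] (G : Multigraph V) (H : Multigraph W)
    (hG : G.Connected) (hH : H.Connected) :
    (G.cartesianProduct H).gonality ≤ Fintype.card V * H.gonality ∧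
      (G.cartesianProduct H).gonality ≤ Fintype.card W * G.gonality := by
  constructor
  · exact G.gonality_cartesianProduct_le_left H
  · refine le_trans ?_ (H.gonality_cartesianProduct_le_left G)
    refine Multigraph.gonality_le_of_iso (Equiv.prodComm V W)
      (G.cartesianProduct H) (H.cartesianProduct G) ?_
    intro a b
    simp only [Multigraph.cartesianProduct, Equiv.prodComm_apply, Prod.fst_swap, Prod.snd_swap]
    exact add_comm _ _
end

section
/- For every finite connected loopless multigraph G, the scramble number of G is at most the screewidth of G: sn(G) ≤ scw(G). -/
open Finset

/-- A hitting set for a collection of vertex sets: a set of vertices meeting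
every member of the collection. -/
def IsHittingSet {V : Type} [DecidableEq V] (B : Finset (Finset V)) (W : Finset V) : Prop :=
  ∀ A ∈ B, (A ∩ W).Nonempty

/-- The minimum size of a hitting set for a collection of vertex sets. -/
noncomputable def hittingNumber {V : Type} [DecidableEq V] (B : Finset (Finset V)) : ℕ :=
  sInf {k : ℕ | ∃ W : Finset V, IsHittingSet B W ∧ W.card = k}

namespace Multigraph

variable {V : Type} [Fintype V] [DecidableEq V] (G : Multigraph V)

/-- A set of vertices induces a connected subgraph. -/
def ConnectedSet (A : Finset V) : Prop :=
  (G.toSimpleGraph.induce (A : Set V)).Connected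

/-- Two vertex sets touch: they share a vertex, or an edge of `G` joins them. -/
def Touches (A B : Finset V) : Prop :=
  (A ∩ B).Nonempty ∨ ∃ a ∈ A, ∃ b ∈ B, 0 < G.m a b

/-- A bramble: a collection of vertex sets, each inducing a connected subgraph,
any two of which touch. -/
def IsBramble (B : Finset (Finset V)) : Prop :=
  (∀ A ∈ B, G.ConnectedSet A) ∧ ∀ A ∈ B, ∀ A' ∈ B, G.Touches A A'

/-- The treewidth of `G`: the maximum order (minimum size of a hitting set) of
a bramble on `G`, minus one. -/
noncomputable def treewidth : ℕ :=
  sSup {k : ℕ | ∃ B : Finset (Finset V), G.IsBramble B ∧ hittingNumber B = k} - 1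

end Multigraph

namespace Multigraph

variable {V : Type} [Fintype V] [DecidableEq V] (G : Multigraph V)

/-- A scramble: a collection of vertex sets (eggs), each inducing a connected
subgraph. -/
def IsScramble (S : Finset (Finset V)) : Prop :=
  ∀ A ∈ S, G.ConnectedSet A

/-- The number of edges of `G` with exactly one endpoint in `A`. -/
def cutSize (A : Finset V) : ℕ := ∑ u ∈ A, ∑ v ∈ Aᶜ, G.m u v

/-- The egg-cut number of a scramble: the minimum number of edges of `G` whose
removal separates `G` into two parts, each containing all vertices of some egg
(`⊤` if no such cut exists).  Such cuts are exactly the sets of edges joining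
some `A` containing an egg to its complement, also containing an egg. -/
noncomputable def eggCutNumber (S : Finset (Finset V)) : ℕ∞ :=
  sInf {k : ℕ∞ | ∃ A : Finset V, (∃ e ∈ S, e ⊆ A) ∧ (∃ e ∈ S, e ⊆ Aᶜ) ∧
    (G.cutSize A : ℕ∞) = k}

/-- The order of a scramble: the minimum of its hitting number and its egg-cut
number. -/
noncomputable def scrambleOrder (S : Finset (Finset V)) : ℕ∞ :=
  min (hittingNumber S : ℕ∞) (G.eggCutNumber S)

/-- The scramble number of `G`: the maximum order of a scramble on `G`. -/
noncomputable def scrambleNumber : ℕ∞ :=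
  sSup {k : ℕ∞ | ∃ S : Finset (Finset V), G.IsScramble S ∧ G.scrambleOrder S = k}

end Multigraph

namespace Multigraph

variable {V : Type} [Fintype V] [DecidableEq V] (G : Multigraph V)

open scoped Classical in
/-- Given a tree-cut decomposition `(T, b)` of `G`, the number of edges of `G`
routed through the link `{x, y}` of `T`: an edge `uv` of `G` is routed through
the link iff `b u` and `b v` are separated by deleting that link from `T`.
Each edge of `G` is counted once (the double sum counts ordered pairs). -/
noncomputable def linkCount {N : Type} (T : SimpleGraph N) (b : V → N) (x y : N) : ℕ :=
  (∑ u : V, ∑ v : V,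
    if ¬ (T.deleteEdges {s(x, y)}).Reachable (b u) (b v) then G.m u v else 0) / 2

open scoped Classical in
/-- Given a tree-cut decomposition `(T, b)` of `G`, the number of vertices of
`G` assigned to the node `n`, plus the number of edges of `G` routed through
`n` with neither endpoint assigned to `n` (an edge `uv` is routed through `n`
iff `n` lies on the path in `T` from `b u` to `b v`). -/
noncomputable def nodeCount {N : Type} (T : SimpleGraph N) (b : V → N) (n : N) : ℕ :=
  (Finset.univ.filter fun v => b v = n).card +
  (∑ u : V, ∑ v : V,
    if b u ≠ n ∧ b v ≠ n ∧ ∃ p : T.Walk (b u) (b v), p.IsPath ∧ n ∈ p.support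
    then G.m u v else 0) / 2

/-- The width of a tree-cut decomposition: the maximum over all links of the
number of edges routed through the link, and over all nodes of the number of
vertices assigned to the node plus the number of edges tunneling through it. -/
noncomputable def decompositionWidth {N : Type} (T : SimpleGraph N) (b : V → N) : ℕ :=
  sSup ({k : ℕ | ∃ x y, T.Adj x y ∧ G.linkCount T b x y = k} ∪
        {k : ℕ | ∃ n, G.nodeCount T b n = k})

/-- The screewidth of `G`: the minimum width of a tree-cut decomposition of
`G`, i.e. of a (finite) tree `T` with the vertices of `G` assigned to its
nodes. -/
noncomputable def screewidth : ℕ :=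
  sInf {k : ℕ | ∃ (r : ℕ) (T : SimpleGraph (Fin r)) (b : V → Fin r),
    T.IsTree ∧ G.decompositionWidth T b = k}

end Multigraph

/-!
Fix a tree-cut decomposition `(T, b)` and a scramble `S`. If some link `xy` of `T` has an egg
entirely on each of its sides, the edges routed through `xy` form an egg-cut, so `‖S‖` is at most
the width. Otherwise every link has a side containing no whole egg; orienting each link
away from such a side, the finite tree `T` has a sink `n`. Then every egg meets the `n`-side of each
link at `n`, so an egg avoiding the bag of `n` is connected and meets two branches at `n`, hence
contains an edge whose tree path passes through `n`. The bag of `n` together with one endpoint of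
each such edge is a hitting set of size at most the width at the node `n`.
-/

namespace SimpleGraph

variable {N : Type*} {T : SimpleGraph N}

lemma Connected.reachable_deleteEdges_or (hT : T.Connected) {x y : N} (hxy : T.Adj x y)
    (a : N) :
    (T.deleteEdges {s(x, y)}).Reachable a x ∨ (T.deleteEdges {s(x, y)}).Reachable a y := by
  classical
  obtain ⟨P, hP⟩ := hT.exists_isPath a x
  by_cases he : s(x, y) ∈ P.edges
  · have hy := P.snd_mem_support_of_mem_edges he
    have hx := Walk.endpoint_notMem_support_takeUntil hP hy hxy.ne
    exact .inr <| reachable_deleteEdges_iff_exists_walk.2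
      ⟨P.takeUntil y hy, fun h => hx ((P.takeUntil y hy).fst_mem_support_of_mem_edges h)⟩
  · exact .inl <| reachable_deleteEdges_iff_exists_walk.2 ⟨P, he⟩

lemma IsTree.reachable_deleteEdges_right_iff (hT : T.IsTree) {x y : N} (hxy : T.Adj x y)
    (a : N) :
    (T.deleteEdges {s(x, y)}).Reachable a y ↔ ¬ (T.deleteEdges {s(x, y)}).Reachable a x := by
  have hxy' : ¬ (T.deleteEdges {s(x, y)}).Reachable x y :=
    isBridge_iff.1 (isAcyclic_iff_forall_adj_isBridge.1 hT.isAcyclic hxy)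
  exact ⟨fun hy hx => hxy' (hx.symm.trans hy),
    (hT.connected.reachable_deleteEdges_or hxy a).resolve_left⟩

lemma IsTree.reachable_deleteEdges_iff (hT : T.IsTree) {x y : N} (hxy : T.Adj x y) {a c : N} :
    (T.deleteEdges {s(x, y)}).Reachable a c ↔
      ((T.deleteEdges {s(x, y)}).Reachable a x ↔ (T.deleteEdges {s(x, y)}).Reachable c x) := by
  refine ⟨fun h => ⟨h.symm.trans, h.trans⟩, fun h => ?_⟩
  by_cases ha : (T.deleteEdges {s(x, y)}).Reachable a x
  · exact ha.trans (h.1 ha).symm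
  · have hc : ¬ (T.deleteEdges {s(x, y)}).Reachable c x := fun hc => ha (h.2 hc)
    rw [← hT.reachable_deleteEdges_right_iff hxy] at ha hc
    exact ha.trans hc.symm

lemma Connected.exists_adj_reachable_deleteEdges (hT : T.Connected) {n a : N} (ha : a ≠ n) :
    ∃ y, T.Adj n y ∧ (T.deleteEdges {s(y, n)}).Reachable a y := by
  obtain ⟨P, hP⟩ := hT.exists_isPath n a
  cases P with
  | nil => exact absurd rfl ha
  | cons hadj q =>
    have hn := ((Walk.cons_isPath_iff _ _).1 hP).2
    exact ⟨_, hadj, (reachable_deleteEdges_iff_exists_walk.2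
      ⟨q, fun h => hn (q.snd_mem_support_of_mem_edges h)⟩).symm⟩

/-- Without a sink, choosing an out-edge at every node would inject the nodes into the edges,
but a tree has fewer edges than nodes. -/
lemma IsTree.exists_sink [Fintype N] (hT : T.IsTree) (R : N → N → Prop)
    (hR : ∀ x y, T.Adj x y → R x y ∨ R y x) : ∃ n, ∀ y, T.Adj n y → R y n := by
  classical
  by_contra! h
  choose f hadj hnR using h
  have hinj : Set.InjOn (fun n => s(n, f n)) (univ : Finset N) := by
    intro a _ c _ hac
    rcases Sym2.eq_iff.1 hac with ⟨h, _⟩ | ⟨hcf, haf⟩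
    · exact h
    · rcases hR a c (haf ▸ hadj a) with h | h
      · exact (hnR c (hcf ▸ h)).elim
      · exact (hnR a (haf ▸ h)).elim
  have hcard := card_le_card_of_injOn _ (fun n _ => mem_edgeFinset.2 (hadj n)) hinj
  have := hT.card_edgeFinset
  simp only [card_univ] at hcard
  omega

end SimpleGraph

namespace Multigraph

variable {V : Type} [Fintype V] [DecidableEq V] (G : Multigraph V)

lemma sum_sum_ite_mem_and (A B : Finset V) :
    ∑ u, ∑ v, (if u ∈ A ∧ v ∈ B then G.m u v else 0) = ∑ u ∈ A, ∑ v ∈ B, G.m u v := by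
  simp [ite_and, Finset.sum_ite_mem]

lemma sum_sum_ite_not_iff_mem (A : Finset V) :
    ∑ u, ∑ v, (if ¬ (u ∈ A ↔ v ∈ A) then G.m u v else 0) = 2 * G.cutSize A := by
  have hsplit : ∀ u v, (if ¬ (u ∈ A ↔ v ∈ A) then G.m u v else 0) =
      (if u ∈ A ∧ v ∈ Aᶜ then G.m u v else 0) + (if u ∈ Aᶜ ∧ v ∈ A then G.m u v else 0) := by
    intro u v
    by_cases hu : u ∈ A <;> by_cases hv : v ∈ A <;> simp [hu, hv]
  simp only [hsplit, sum_add_distrib, sum_sum_ite_mem_and, cutSize]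
  rw [two_mul, sum_comm (s := Aᶜ)]
  simp only [G.symm]

lemma exists_cover_two_mul_card_le (P : V → V → Prop) [DecidableRel P]
    (hP : ∀ u v, P u v → P v u) :
    ∃ W : Finset V, (∀ u v, P u v → 0 < G.m u v → u ∈ W ∨ v ∈ W) ∧
      2 * #W ≤ ∑ u, ∑ v, if P u v then G.m u v else 0 := by
  classical
  let : LinearOrder V := LinearOrder.lift' _ (Fintype.equivFin V).injective
  set s := ∑ u, ∑ v, if P u v ∧ u < v then G.m u v else 0
  -- every edge is covered by its smaller endpoint
  set W : Finset V := {u | ∃ v, P u v ∧ 0 < G.m u v ∧ u < v}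
  refine ⟨W, fun u v huv hm => ?_, ?_⟩
  · rcases lt_trichotomy u v with h | rfl | h
    · exact .inl (mem_filter.2 ⟨mem_univ u, v, huv, hm, h⟩)
    · rw [G.loopless] at hm; omega
    · exact .inr (mem_filter.2 ⟨mem_univ v, u, hP u v huv, G.symm u v ▸ hm, h⟩)
  have hW : #W ≤ s := calc
    #W = ∑ u ∈ W, 1 := card_eq_sum_ones W
    _ ≤ ∑ u ∈ W, ∑ v, if P u v ∧ u < v then G.m u v else 0 := by
      refine sum_le_sum fun u hu => ?_
      obtain ⟨v, hPuv, hm, huv⟩ := (mem_filter.1 hu).2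
      refine le_trans ?_ (single_le_sum (fun v _ => Nat.zero_le _) (mem_univ v))
      rw [if_pos ⟨hPuv, huv⟩]
      exact hm
    _ ≤ s := sum_le_sum_of_subset (subset_univ W)
  have hsplit : ∀ u v, (if P u v then G.m u v else 0) =
      (if P u v ∧ u < v then G.m u v else 0) + (if P v u ∧ v < u then G.m v u else 0) := by
    intro u v
    rcases lt_trichotomy u v with h | rfl | h
    · simp [h, h.not_gt]
    · simp [G.loopless]
    · have : P u v ↔ P v u := ⟨hP u v, hP v u⟩
      simp [h, h.not_gt, this, G.symm u v]
  rw [sum_congr rfl fun u _ => sum_congr rfl fun v _ => hsplit u v]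
  simp only [sum_add_distrib]
  rw [sum_comm (f := fun u v => if P v u ∧ v < u then G.m v u else 0)]
  omega

variable {G} in
lemma ConnectedSet.exists_boundary_edge {e A : Finset V} (he : G.ConnectedSet e) {a c : V}
    (ha : a ∈ e) (haA : a ∈ A) (hc : c ∈ e) (hcA : c ∉ A) :
    ∃ u ∈ e, ∃ v ∈ e, 0 < G.m u v ∧ u ∈ A ∧ v ∉ A := by
  obtain ⟨p⟩ := SimpleGraph.Connected.preconnected he ⟨a, ha⟩ ⟨c, hc⟩
  obtain ⟨d, -, hd₁, hd₂⟩ := p.exists_boundary_dart {x : (e : Set V) | (x : V) ∈ A} haA hcA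
  exact ⟨d.fst, d.fst.2, d.snd, d.snd.2, d.adj, hd₁, hd₂⟩

end Multigraph

open scoped Classical in
noncomputable def linkSide {V N : Type} [Fintype V] (T : SimpleGraph N) (b : V → N) (x y : N) :
    Finset V :=
  {v | (T.deleteEdges {s(x, y)}).Reachable (b v) x}

section LinkSide

variable {V N : Type} [Fintype V] {T : SimpleGraph N} {b : V → N}

lemma mem_linkSide {x y : N} {v : V} :
    v ∈ linkSide T b x y ↔ (T.deleteEdges {s(x, y)}).Reachable (b v) x := by
  simp [linkSide]

lemma linkSide_swap [DecidableEq V] (hT : T.IsTree) {x y : N} (hxy : T.Adj x y) :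
    linkSide T b y x = (linkSide T b x y)ᶜ := by
  ext v
  rw [mem_compl, mem_linkSide, mem_linkSide, Sym2.eq_swap,
    hT.reachable_deleteEdges_right_iff hxy]

end LinkSide

namespace Multigraph

variable {V : Type} [Fintype V] [DecidableEq V] (G : Multigraph V)
variable {N : Type} {T : SimpleGraph N} (b : V → N)

lemma linkCount_eq_cutSize (hT : T.IsTree) {x y : N} (hxy : T.Adj x y) :
    G.linkCount T b x y = G.cutSize (linkSide T b x y) := by
  have hsep : ∀ u v, ¬ (T.deleteEdges {s(x, y)}).Reachable (b u) (b v) ↔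
      ¬ (u ∈ linkSide T b x y ↔ v ∈ linkSide T b x y) := by
    intro u v
    rw [mem_linkSide, mem_linkSide, hT.reachable_deleteEdges_iff hxy]
  rw [linkCount]
  simp only [hsep, sum_sum_ite_not_iff_mem]
  omega

lemma eggCutNumber_le_linkCount (hT : T.IsTree) {x y : N} (hxy : T.Adj x y)
    {S : Finset (Finset V)} (hx : ∃ e ∈ S, e ⊆ linkSide T b x y)
    (hy : ∃ e ∈ S, e ⊆ linkSide T b y x) :
    G.eggCutNumber S ≤ G.linkCount T b x y := by
  rw [linkCount_eq_cutSize G b hT hxy]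
  rw [linkSide_swap hT hxy] at hy
  exact sInf_le ⟨linkSide T b x y, hx, hy, rfl⟩

lemma exists_edge_through_node (hT : T.IsTree) {e : Finset V} (he : G.ConnectedSet e) {n : N}
    (hbag : ∀ v ∈ e, b v ≠ n) (hsides : ∀ y, T.Adj n y → ¬ e ⊆ linkSide T b y n) :
    ∃ u ∈ e, ∃ v ∈ e, 0 < G.m u v ∧ ∃ p : T.Walk (b u) (b v), p.IsPath ∧ n ∈ p.support := by
  obtain ⟨⟨a, ha⟩⟩ := SimpleGraph.Connected.nonempty he
  obtain ⟨y, hny, hay⟩ := hT.connected.exists_adj_reachable_deleteEdges (hbag a ha)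
  obtain ⟨c, hc, hcy⟩ := not_subset.1 (hsides y hny)
  obtain ⟨u, hu, v, hv, huv, huy, hvy⟩ := he.exists_boundary_edge ha
    (mem_linkSide.2 hay) hc hcy
  obtain ⟨p, hp⟩ := hT.connected.exists_isPath (b u) (b v)
  have hsep : ¬ (T.deleteEdges {s(y, n)}).Reachable (b u) (b v) := fun h =>
    hvy (mem_linkSide.2 (h.symm.trans (mem_linkSide.1 huy)))
  exact ⟨u, hu, v, hv, huv, p, hp,
    p.snd_mem_support_of_mem_edges (p.mem_edges_of_not_reachable_deleteEdges hsep)⟩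

lemma hittingNumber_le_nodeCount (hT : T.IsTree) {S : Finset (Finset V)} (hS : G.IsScramble S)
    {n : N} (hn : ∀ y, T.Adj n y → ∀ e ∈ S, ¬ e ⊆ linkSide T b y n) :
    hittingNumber S ≤ G.nodeCount T b n := by
  classical
  obtain ⟨W, hW, hcard⟩ := G.exists_cover_two_mul_card_le
    (fun u v => b u ≠ n ∧ b v ≠ n ∧ ∃ p : T.Walk (b u) (b v), p.IsPath ∧ n ∈ p.support)
    (fun u v ⟨hu, hv, p, hp, hnp⟩ => ⟨hv, hu, p.reverse, hp.reverse, by simpa using hnp⟩)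
  have hhit : IsHittingSet S (({v | b v = n} : Finset V) ∪ W) := by
    intro e he
    by_cases hbag : ∃ v ∈ e, b v = n
    · obtain ⟨v, hv, hvn⟩ := hbag
      exact ⟨v, by simp [hv, hvn]⟩
    push Not at hbag
    obtain ⟨u, hu, v, hv, huv, hpath⟩ :=
      G.exists_edge_through_node b hT (hS e he) hbag fun y hy => hn y hy e he
    rcases hW u v ⟨hbag u hu, hbag v hv, hpath⟩ huv with huW | hvW
    · exact ⟨u, by simp [hu, huW]⟩
    · exact ⟨v, by simp [hv, hvW]⟩
  calc hittingNumber S ≤ #(({v | b v = n} : Finset V) ∪ W) := Nat.sInf_le ⟨_, hhit, rfl⟩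
    _ ≤ #({v | b v = n} : Finset V) + #W := card_union_le _ _
    _ ≤ G.nodeCount T b n := by rw [nodeCount]; omega

lemma le_decompositionWidth [Finite N] {k : ℕ}
    (hk : k ∈ {k | ∃ x y, T.Adj x y ∧ G.linkCount T b x y = k} ∪
      {k | ∃ n, G.nodeCount T b n = k}) :
    k ≤ G.decompositionWidth T b := by
  refine le_csSup (Set.Finite.bddAbove ?_) hk
  refine ((Set.finite_range fun p : N × N => G.linkCount T b p.1 p.2).subset ?_).union
    ((Set.finite_range (G.nodeCount T b)).subset ?_)
  · rintro _ ⟨x, y, -, rfl⟩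
    exact ⟨(x, y), rfl⟩
  · rintro _ ⟨n, rfl⟩
    exact ⟨n, rfl⟩

lemma scrambleOrder_le_decompositionWidth [Fintype N] (hT : T.IsTree) {S : Finset (Finset V)}
    (hS : G.IsScramble S) : G.scrambleOrder S ≤ G.decompositionWidth T b := by
  by_cases hcut : ∃ x y, T.Adj x y ∧
      (∃ e ∈ S, e ⊆ linkSide T b x y) ∧ ∃ e ∈ S, e ⊆ linkSide T b y x
  · obtain ⟨x, y, hxy, hx, hy⟩ := hcut
    calc G.scrambleOrder S ≤ G.eggCutNumber S := min_le_right _ _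
      _ ≤ G.linkCount T b x y := G.eggCutNumber_le_linkCount b hT hxy hx hy
      _ ≤ G.decompositionWidth T b := by
        exact_mod_cast G.le_decompositionWidth b (.inl ⟨x, y, hxy, rfl⟩)
  · obtain ⟨n, hn⟩ := hT.exists_sink (fun x y => ∀ e ∈ S, ¬ e ⊆ linkSide T b x y)
      fun x y hxy => by
        by_contra! h
        exact hcut ⟨x, y, hxy, h⟩
    calc G.scrambleOrder S ≤ hittingNumber S := min_le_left _ _
      _ ≤ G.nodeCount T b n := by exact_mod_cast G.hittingNumber_le_nodeCount b hT hS hn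
      _ ≤ G.decompositionWidth T b := by
        exact_mod_cast G.le_decompositionWidth b (.inr ⟨n, rfl⟩)

end Multigraph

theorem scrambleNumber_le_screewidth_general {V : Type} [Fintype V] [DecidableEq V]
    (G : Multigraph V) :
    G.scrambleNumber ≤ (G.screewidth : ℕ∞) := by
  obtain ⟨r, T, b, hT, hwidth⟩ : G.screewidth ∈ {k : ℕ | ∃ (r : ℕ) (T : SimpleGraph (Fin r))
      (b : V → Fin r), T.IsTree ∧ G.decompositionWidth T b = k} :=
    Nat.sInf_mem ⟨_, 1, ⊥, fun _ => 0, .of_subsingleton, rfl⟩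
  refine sSup_le ?_
  rintro _ ⟨S, hS, rfl⟩
  rw [← hwidth]
  exact G.scrambleOrder_le_decompositionWidth b hT hS

/-- For every finite connected loopless multigraph `G`, the scramble number of
`G` is at most the screewidth of `G`. -/
theorem scrambleNumber_le_screewidth {V : Type} [Fintype V] [DecidableEq V]
    (G : Multigraph V) (hG : G.Connected) :
    G.scrambleNumber ≤ (G.screewidth : ℕ∞) :=
  scrambleNumber_le_screewidth_general G
end

section
/- If H is a subgraph of the dodecahedron graph with 6 ≤ |V(H)| ≤ 10, then the outdegree of H is at least 6. -/
/-- Edge list of the dodecahedron graph (as the generalized Petersen graph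
`GP(10,2)`): an outer 10-cycle `0,…,9`, spokes `i – (10+i)`, and two inner
pentagons on the even and odd inner vertices. -/
def dodecahedronEdges : List (ℕ × ℕ) :=
  [(0,1),(1,2),(2,3),(3,4),(4,5),(5,6),(6,7),(7,8),(8,9),(9,0),
   (0,10),(1,11),(2,12),(3,13),(4,14),(5,15),(6,16),(7,17),(8,18),(9,19),
   (10,12),(12,14),(14,16),(16,18),(18,10),
   (11,13),(13,15),(15,17),(17,19),(19,11)]

/-- The dodecahedron graph: the 1-skeleton of the regular dodecahedron, a
3-regular planar simple graph on 20 vertices with 30 edges and 12 pentagonal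
faces. -/
def dodecahedronGraph : SimpleGraph (Fin 20) where
  Adj u v := u ≠ v ∧
    ((u.val, v.val) ∈ dodecahedronEdges ∨ (v.val, u.val) ∈ dodecahedronEdges)
  symm := ⟨fun _ _ h => ⟨h.1.symm, h.2.symm⟩⟩
  loopless := ⟨fun _ h => h.1 rfl⟩

instance : DecidableRel dodecahedronGraph.Adj :=
  fun u v => inferInstanceAs (Decidable (u ≠ v ∧
      ((u.val, v.val) ∈ dodecahedronEdges ∨ (v.val, u.val) ∈ dodecahedronEdges)))

/-- The outdegree of a subgraph of `G` with vertex set `A`: the number of edges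
of `G` with exactly one endpoint in `A`. -/
def SimpleGraph.outdeg {V : Type} [Fintype V] [DecidableEq V]
    (G : SimpleGraph V) [DecidableRel G.Adj] (A : Finset V) : ℕ :=
  ∑ u ∈ A, ∑ v ∈ Aᶜ, if G.Adj u v then 1 else 0

namespace DodecAux

/-! ### Bit patterns -/

def pat : Nat → Nat → Nat
  | _, 0 => 0
  | a, k+1 => if a = k then ((1 <<< (1 <<< k)) - 1) <<< (1 <<< k)
              else pat a k ||| (pat a k <<< (1 <<< k))

theorem lor_lt_two_pow {x y n : Nat} (hx : x < 2^n) (hy : y < 2^n) : x ||| y < 2^n := by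
  apply Nat.lt_pow_two_of_testBit
  intro i hi
  have fx : x.testBit i = false := Nat.testBit_lt_two_pow
    (lt_of_lt_of_le hx (Nat.pow_le_pow_right (by norm_num) hi))
  have fy : y.testBit i = false := Nat.testBit_lt_two_pow
    (lt_of_lt_of_le hy (Nat.pow_le_pow_right (by norm_num) hi))
  simp [fx, fy]

theorem two_pow_succ (k : Nat) : 2^(2^(k+1)) = 2^(2^k) * 2^(2^k) := by
  rw [← pow_add]
  congr 1
  rw [pow_succ]
  omega

theorem pat_lt (a k : Nat) : pat a k < 2^(2^k) := by
  induction k generalizing a with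
  | zero => simp [pat]
  | succ k ih =>
    rw [pat]
    split
    · rw [Nat.one_shiftLeft, Nat.shiftLeft_eq, Nat.one_shiftLeft, two_pow_succ]
      have h := Nat.two_pow_pos (2^k)
      exact (Nat.mul_lt_mul_right h).mpr (by omega)
    · have h := Nat.two_pow_pos (2^k)
      have hx := ih a
      apply lor_lt_two_pow
      · rw [two_pow_succ]
        calc pat a k < 2^(2^k) := hx
          _ ≤ 2^(2^k) * 2^(2^k) := Nat.le_mul_of_pos_left _ h
      · rw [Nat.shiftLeft_eq, Nat.one_shiftLeft, two_pow_succ]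
        exact (Nat.mul_lt_mul_right h).mpr hx

theorem testBit_pat {a k m : Nat} (ha : a < k) (hm : m < 2^k) :
    (pat a k).testBit m = m.testBit a := by
  induction k generalizing a m with
  | zero => omega
  | succ k ih =>
    have hsp : 2^(k+1) = 2^k + 2^k := by rw [pow_succ]; omega
    rw [pat]
    by_cases hak : a = k
    · subst hak
      rw [if_pos rfl, Nat.one_shiftLeft, Nat.one_shiftLeft, Nat.testBit_shiftLeft,
        Nat.testBit_two_pow_sub_one]
      by_cases hle : 2^a ≤ m
      · have h1 : m - 2^a < 2^a := by omega
        have h2 : m - 2^a < 2^(2^a) := lt_of_lt_of_le h1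
          (Nat.pow_le_pow_right (by norm_num) (Nat.le_of_lt (Nat.lt_two_pow_self (n := a))))
        have hm' : m = 2^a + (m - 2^a) := by omega
        rw [hm', Nat.testBit_two_pow_add_eq, Nat.testBit_lt_two_pow h1]
        simp [Nat.le_add_right, h2]
        omega
      · have : m < 2^a := by omega
        rw [Nat.testBit_lt_two_pow this]
        simp
        omega
    · have ha' : a < k := by omega
      rw [if_neg hak, Nat.testBit_or, Nat.testBit_shiftLeft, Nat.one_shiftLeft]
      by_cases hmk : m < 2^k
      · rw [ih ha' hmk]
        have : ¬ (2^k ≤ m) := by omega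
        simp [this]
      · have hle : 2^k ≤ m := by omega
        have hfst : (pat a k).testBit m = false := by
          apply Nat.testBit_lt_two_pow
          calc pat a k < 2^(2^k) := pat_lt a k
            _ ≤ 2^m := Nat.pow_le_pow_right (by norm_num) hle
        have h1 : m - 2^k < 2^k := by omega
        rw [hfst, ih ha' h1]
        have hm' : m = 2^k + (m - 2^k) := by omega
        conv_rhs => rw [hm']
        rw [Nat.testBit_two_pow_add_gt ha']
        simp [hle]

/-! ### The bit-sliced computation -/

def FF : Nat := (1 <<< (1 <<< 20)) - 1

abbrev C5 := Nat × Nat × Nat × Nat × Nat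
abbrev B5 := Bool × Bool × Bool × Bool × Bool

def addC (c : C5) (x : Nat) : C5 :=
  (c.1 ^^^ x, c.2.1 ^^^ (c.1 &&& x), c.2.2.1 ^^^ (c.2.1 &&& c.1 &&& x),
   c.2.2.2.1 ^^^ (c.2.2.1 &&& c.2.1 &&& c.1 &&& x),
   c.2.2.2.2 ^^^ (c.2.2.2.1 &&& c.2.2.1 &&& c.2.1 &&& c.1 &&& x))

def addB (c : B5) (x : Bool) : B5 :=
  (xor c.1 x, xor c.2.1 (c.1 && x), xor c.2.2.1 (c.2.1 && c.1 && x),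
   xor c.2.2.2.1 (c.2.2.1 && c.2.1 && c.1 && x),
   xor c.2.2.2.2 (c.2.2.2.1 && c.2.2.1 && c.2.1 && c.1 && x))

def cutC : C5 :=
  (dodecahedronEdges.map (fun e => pat e.1 20 ^^^ pat e.2 20)).foldl addC (0,0,0,0,0)

def popC : C5 :=
  ((List.range 20).map (fun a => pat a 20)).foldl addC (0,0,0,0,0)

def badN : Nat :=
  ((popC.2.2.2.2 ||| popC.2.2.2.1 ||| (popC.2.2.1 &&& popC.2.1)) &&&
   ((FF ^^^ popC.2.2.2.2) &&& ((FF ^^^ popC.2.2.2.1) |||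
     ((FF ^^^ popC.2.2.1) &&& (FF ^^^ (popC.2.1 &&& popC.1)))))) &&&
  (FF ^^^ (cutC.2.2.2.2 ||| cutC.2.2.2.1 ||| (cutC.2.2.1 &&& cutC.2.1)))

set_option maxRecDepth 40000 in
theorem badN_eq : badN = 0 := by decide

def tb (m : Nat) (c : C5) : B5 :=
  (c.1.testBit m, c.2.1.testBit m, c.2.2.1.testBit m, c.2.2.2.1.testBit m, c.2.2.2.2.testBit m)

theorem tb_addC (m : Nat) (c : C5) (x : Nat) :
    tb m (addC c x) = addB (tb m c) (x.testBit m) := by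
  simp [tb, addC, addB]

theorem tb_foldl (m : Nat) (l : List Nat) (c : C5) :
    tb m (l.foldl addC c) = (l.map (fun x => x.testBit m)).foldl addB (tb m c) := by
  induction l generalizing c with
  | nil => rfl
  | cons x l ih => simp [List.foldl_cons, ih, tb_addC]

def valB (c : B5) : Nat :=
  c.1.toNat + 2 * c.2.1.toNat + 4 * c.2.2.1.toNat + 8 * c.2.2.2.1.toNat + 16 * c.2.2.2.2.toNat

theorem valB_addB : ∀ (c : B5) (b : Bool), valB c + b.toNat ≤ 31 →
    valB (addB c b) = valB c + b.toNat := by decide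

theorem valB_foldl : ∀ (l : List Bool) (c : B5), valB c + l.length ≤ 31 →
    valB (l.foldl addB c) = valB c + l.count true := by
  intro l
  induction l with
  | nil => simp
  | cons b l ih =>
    intro c h
    simp only [List.length_cons] at h
    have hb : b.toNat ≤ 1 := by cases b <;> simp
    have h1 : valB c + b.toNat ≤ 31 := by omega
    have h2 : valB (addB c b) + l.length ≤ 31 := by rw [valB_addB c b h1]; omega
    rw [List.foldl_cons, ih _ h2, valB_addB c b h1, List.count_cons]
    cases b <;> simp <;> omega

theorem circuit_pop : ∀ c : B5, 6 ≤ valB c → valB c ≤ 10 →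
    ((c.2.2.2.2 || c.2.2.2.1 || (c.2.2.1 && c.2.1)) &&
     (!c.2.2.2.2 && (!c.2.2.2.1 || (!c.2.2.1 && !(c.2.1 && c.1))))) = true := by decide

theorem circuit_cut : ∀ c : B5,
    (c.2.2.2.2 || c.2.2.2.1 || (c.2.2.1 && c.2.1)) = true → 6 ≤ valB c := by decide

/-! ### Masks of vertex sets -/

def maskOf (A : Finset (Fin 20)) : Nat := ∑ u ∈ A, 2^(u.val)

theorem sum_range_two_pow (n : Nat) : ∑ k ∈ Finset.range n, 2^k = 2^n - 1 := by
  induction n with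
  | zero => simp
  | succ n ih =>
    rw [Finset.sum_range_succ, ih]
    have := Nat.two_pow_pos n
    rw [pow_succ]
    omega

theorem mask_bound {n : Nat} (A : Finset (Fin 20)) (h : ∀ u ∈ A, u.val < n) :
    maskOf A < 2^n := by
  have h1 : maskOf A = ∑ k ∈ A.image Fin.val, 2^k := by
    rw [Finset.sum_image (fun x _ y _ h => Fin.val_injective h)]
    rfl
  have h2 : A.image Fin.val ⊆ Finset.range n := by
    intro k hk
    obtain ⟨u, hu, rfl⟩ := Finset.mem_image.mp hk
    exact Finset.mem_range.mpr (h u hu)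
  have h3 : ∑ k ∈ A.image Fin.val, 2^k ≤ ∑ k ∈ Finset.range n, 2^k :=
    Finset.sum_le_sum_of_subset h2
  rw [h1]
  have := Nat.two_pow_pos n
  rw [sum_range_two_pow] at h3
  omega

theorem testBit_maskOf (A : Finset (Fin 20)) (u : Fin 20) :
    (maskOf A).testBit u.val = decide (u ∈ A) := by
  induction A using Finset.induction_on_max with
  | empty => simp [maskOf]
  | insert a s hmax ih =>
    have hans : a ∉ s := fun h => absurd (hmax a h) (lt_irrefl a)
    have hins : maskOf (insert a s) = 2^a.val + maskOf s := Finset.sum_insert hans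
    have hlt : maskOf s < 2^a.val := mask_bound s (fun u hu => hmax u hu)
    rcases lt_trichotomy u.val a.val with hc | hc | hc
    · rw [hins, Nat.testBit_two_pow_add_gt hc, ih]
      have hne : u ≠ a := fun h => by subst h; omega
      simp [Finset.mem_insert, hne]
    · have hua : u = a := Fin.val_injective hc
      subst hua
      rw [hins, Nat.testBit_two_pow_add_eq, Nat.testBit_lt_two_pow hlt]
      simp
    · have hfa : (maskOf (insert a s)).testBit u.val = false := by
        apply Nat.testBit_lt_two_pow
        calc maskOf (insert a s) < 2^(a.val + 1) := by
              rw [hins, pow_succ]; omega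
          _ ≤ 2^u.val := Nat.pow_le_pow_right (by norm_num) (by omega)
      rw [hfa]
      have hu : u ∉ insert a s := by
        intro h
        rcases Finset.mem_insert.mp h with h | h
        · subst h; omega
        · have h2 : u.val < a.val := hmax u h
          omega
      simp [hu]

/-! ### From `outdeg` to a count over the edge list -/

def ELf : List (Fin 20 × Fin 20) :=
  [(0,1),(1,2),(2,3),(3,4),(4,5),(5,6),(6,7),(7,8),(8,9),(9,0),
   (0,10),(1,11),(2,12),(3,13),(4,14),(5,15),(6,16),(7,17),(8,18),(9,19),
   (10,12),(12,14),(14,16),(16,18),(18,10),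
   (11,13),(13,15),(15,17),(17,19),(19,11)]

theorem edges_val : dodecahedronEdges = ELf.map (fun e => (e.1.val, e.2.val)) := by decide

theorem sum_map_add (l : List (Fin 20 × Fin 20)) (f g : Fin 20 × Fin 20 → ℕ) :
    (l.map f).sum + (l.map g).sum = (l.map (fun x => f x + g x)).sum := by
  induction l with
  | nil => rfl
  | cons x l ih => simp only [List.map_cons, List.sum_cons] at *; omega

theorem sum_ite_eq_countP (l : List (Fin 20 × Fin 20)) (p : Fin 20 × Fin 20 → Bool) :
    (l.map (fun e => if p e then 1 else 0)).sum = l.countP p := by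
  induction l with
  | nil => rfl
  | cons x l ih =>
    simp only [List.map_cons, List.sum_cons, List.countP_cons, ih]
    by_cases h : p x <;> simp [h] <;> omega

theorem D_eq : (Finset.univ.filter (fun p : Fin 20 × Fin 20 => dodecahedronGraph.Adj p.1 p.2))
    = (ELf ++ ELf.map Prod.swap).toFinset := by decide +kernel

theorem LL_nodup : (ELf ++ ELf.map Prod.swap).Nodup := by decide

theorem outdeg_eq (A : Finset (Fin 20)) :
    dodecahedronGraph.outdeg A
      = ELf.countP (fun e => xor (decide (e.1 ∈ A)) (decide (e.2 ∈ A))) := by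
  rw [SimpleGraph.outdeg]
  have step1 : ∑ u ∈ A, ∑ v ∈ Aᶜ, (if dodecahedronGraph.Adj u v then 1 else 0)
      = ∑ p : Fin 20 × Fin 20, (if dodecahedronGraph.Adj p.1 p.2 then
          (if p.1 ∈ A ∧ p.2 ∉ A then 1 else 0) else 0) := by
    rw [← Finset.univ_product_univ, Finset.sum_product]
    rw [← Fintype.sum_ite_mem A (fun u => ∑ v ∈ Aᶜ, if dodecahedronGraph.Adj u v then 1 else 0)]
    apply Finset.sum_congr rfl
    intro u _
    by_cases hu : u ∈ A
    · simp only [hu, if_true]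
      rw [← Fintype.sum_ite_mem Aᶜ (fun v => if dodecahedronGraph.Adj u v then 1 else 0)]
      apply Finset.sum_congr rfl
      intro v _
      by_cases hv : v ∈ A <;> by_cases ha : dodecahedronGraph.Adj u v <;>
        simp [hv, ha, hu, Finset.mem_compl]
    · simp only [hu, if_false]
      symm
      apply Finset.sum_eq_zero
      intro v _
      by_cases ha : dodecahedronGraph.Adj u v <;> simp [ha, hu]
  rw [step1, ← Finset.sum_filter
    (fun p : Fin 20 × Fin 20 => dodecahedronGraph.Adj p.1 p.2)
    (fun p : Fin 20 × Fin 20 => if p.1 ∈ A ∧ p.2 ∉ A then 1 else 0), D_eq,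
    List.sum_toFinset _ LL_nodup, List.map_append, List.sum_append, List.map_map,
    sum_map_add]
  have hfun : (fun x : Fin 20 × Fin 20 =>
        (if x.1 ∈ A ∧ x.2 ∉ A then 1 else 0) +
        (if (Prod.swap x).1 ∈ A ∧ (Prod.swap x).2 ∉ A then 1 else 0))
      = (fun e : Fin 20 × Fin 20 =>
          if xor (decide (e.1 ∈ A)) (decide (e.2 ∈ A)) then 1 else 0) := by
    funext e
    by_cases h1 : e.1 ∈ A <;> by_cases h2 : e.2 ∈ A <;> simp [h1, h2]
  rw [show ((fun p : Fin 20 × Fin 20 => if p.1 ∈ A ∧ p.2 ∉ A then 1 else 0) ∘ Prod.swap)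
      = (fun x : Fin 20 × Fin 20 => if (Prod.swap x).1 ∈ A ∧ (Prod.swap x).2 ∉ A then 1 else 0)
    from rfl, hfun, sum_ite_eq_countP]

/-! ### Counting lemmas -/

theorem count_true_map {α : Type} (l : List α) (f : α → Bool) :
    (l.map f).count true = l.countP f := by
  rw [List.count, List.countP_map]
  congr 1
  funext x
  simp [Function.comp]

theorem countP_range (n : Nat) (p : Nat → Bool) :
    (List.range n).countP p = ∑ a ∈ Finset.range n, (if p a then 1 else 0) := by
  induction n with
  | zero => rfl
  | succ n ih =>
    rw [List.range_succ, List.countP_append, Finset.sum_range_succ, ih]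
    simp [List.countP_cons]

theorem pop_count (A : Finset (Fin 20)) :
    (List.range 20).countP (fun a => (maskOf A).testBit a) = A.card := by
  rw [countP_range, ← Finset.card_filter]
  have himg : (Finset.range 20).filter (fun a => (maskOf A).testBit a) = A.image Fin.val := by
    ext a
    simp only [Finset.mem_filter, Finset.mem_range, Finset.mem_image]
    constructor
    · rintro ⟨h20, hbit⟩
      refine ⟨⟨a, h20⟩, ?_, rfl⟩
      have := testBit_maskOf A ⟨a, h20⟩
      simp only at this
      rw [this] at hbit
      exact of_decide_eq_true hbit
    · rintro ⟨u, hu, rfl⟩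
      refine ⟨u.isLt, ?_⟩
      rw [testBit_maskOf A u]
      simpa using hu
  rw [himg, Finset.card_image_of_injective _ Fin.val_injective]

end DodecAux

open DodecAux in
/-- If `H` is a subgraph of the dodecahedron graph with `6 ≤ |V(H)| ≤ 10`,
then the outdegree of `H` is at least `6`. -/
theorem dodecahedron_outdeg (A : Finset (Fin 20))
    (h1 : 6 ≤ A.card) (h2 : A.card ≤ 10) :
    6 ≤ dodecahedronGraph.outdeg A := by
  set m : Nat := maskOf A with hm
  have hm20 : m < 2^20 := mask_bound A (fun u _ => u.isLt)
  -- the pop counter evaluated at bit m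
  have hinit : tb m ((0,0,0,0,0) : C5) = (false, false, false, false, false) := by
    simp [tb]
  have hpop : tb m popC
      = ((List.range 20).map (fun a => m.testBit a)).foldl addB
          (false, false, false, false, false) := by
    rw [popC, tb_foldl, List.map_map, hinit]
    have hl : (List.range 20).map ((fun x => x.testBit m) ∘ (fun a => pat a 20))
        = (List.range 20).map (fun a => m.testBit a) := by
      apply List.map_congr_left
      intro a hamem
      have ha : a < 20 := List.mem_range.mp hamem
      simp only [Function.comp]
      exact testBit_pat ha hm20
    rw [hl]
  have hedge : ∀ e ∈ dodecahedronEdges, e.1 < 20 ∧ e.2 < 20 := by decide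
  have hcut : tb m cutC
      = (dodecahedronEdges.map (fun e => xor (m.testBit e.1) (m.testBit e.2))).foldl addB
          (false, false, false, false, false) := by
    rw [cutC, tb_foldl, List.map_map, hinit]
    have hl : dodecahedronEdges.map ((fun x => x.testBit m) ∘ (fun e => pat e.1 20 ^^^ pat e.2 20))
        = dodecahedronEdges.map (fun e => xor (m.testBit e.1) (m.testBit e.2)) := by
      apply List.map_congr_left
      intro e hemem
      obtain ⟨he1, he2⟩ := hedge e hemem
      simp only [Function.comp]
      rw [Nat.testBit_xor, testBit_pat he1 hm20, testBit_pat he2 hm20]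
    rw [hl]
  -- value of the pop counter is the cardinality of A
  have hpv : valB (tb m popC) = A.card := by
    rw [hpop, valB_foldl _ _ (by simp [valB]), count_true_map]
    simpa [valB] using pop_count A
  -- value of the cut counter is the outdegree of A
  have hcv : valB (tb m cutC) = dodecahedronGraph.outdeg A := by
    rw [hcut, valB_foldl _ _ (by simp [valB, dodecahedronEdges]), count_true_map, outdeg_eq,
      edges_val, List.countP_map]
    have hz : valB (false, false, false, false, false) = 0 := rfl
    rw [hz, Nat.zero_add]
    congr 1
    funext e
    simp only [Function.comp]
    rw [testBit_maskOf A e.1, testBit_maskOf A e.2]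
  -- extract bit m from badN = 0
  have hFF : FF.testBit m = true := by
    rw [FF, Nat.one_shiftLeft, Nat.one_shiftLeft, Nat.testBit_two_pow_sub_one]
    have : (2:ℕ)^20 ≤ 2^(2^20) := Nat.pow_le_pow_right (by norm_num) (by norm_num)
    simp
    omega
  have h0 : badN.testBit m = false := by rw [badN_eq]; exact Nat.zero_testBit m
  rw [badN] at h0
  simp only [Nat.testBit_and, Nat.testBit_or, Nat.testBit_xor, hFF, Bool.true_xor] at h0
  have e0 : popC.1.testBit m = (tb m popC).1 := rfl
  have e1 : popC.2.1.testBit m = (tb m popC).2.1 := rfl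
  have e2 : popC.2.2.1.testBit m = (tb m popC).2.2.1 := rfl
  have e3 : popC.2.2.2.1.testBit m = (tb m popC).2.2.2.1 := rfl
  have e4 : popC.2.2.2.2.testBit m = (tb m popC).2.2.2.2 := rfl
  have f1 : cutC.2.1.testBit m = (tb m cutC).2.1 := rfl
  have f2 : cutC.2.2.1.testBit m = (tb m cutC).2.2.1 := rfl
  have f3 : cutC.2.2.2.1.testBit m = (tb m cutC).2.2.2.1 := rfl
  have f4 : cutC.2.2.2.2.testBit m = (tb m cutC).2.2.2.2 := rfl
  rw [e0, e1, e2, e3, e4, f1, f2, f3, f4] at h0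
  have hcirc := circuit_pop (tb m popC) (by omega) (by omega)
  rw [hcirc, Bool.true_and, Bool.not_eq_false'] at h0
  have := circuit_cut (tb m cutC) h0
  omega
end

section
/- The 2-uniform scramble on the icosahedron graph, whose eggs are exactly the pairs of adjacent vertices, has order 8: its hitting number is 9 and its egg-cut number is 8. -/
open Finset

/-- Edge list of the icosahedron graph: apexes `0` and `11`, an upper pentagon
`1,…,5`, a lower pentagon `6,…,10`, with an antiprism between the pentagons. -/
def icosahedronEdges : List (ℕ × ℕ) :=
  [(0,1),(0,2),(0,3),(0,4),(0,5),
   (1,2),(2,3),(3,4),(4,5),(5,1),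
   (1,6),(1,7),(2,7),(2,8),(3,8),(3,9),(4,9),(4,10),(5,10),(5,6),
   (6,7),(7,8),(8,9),(9,10),(10,6),
   (11,6),(11,7),(11,8),(11,9),(11,10)]

/-- The icosahedron graph: the 1-skeleton of the regular icosahedron, the
5-regular simple graph on 12 vertices with 30 edges. -/
def icosahedronGraph : SimpleGraph (Fin 12) where
  Adj u v := u ≠ v ∧
    ((u.val, v.val) ∈ icosahedronEdges ∨ (v.val, u.val) ∈ icosahedronEdges)
  symm := ⟨fun _ _ h => ⟨h.1.symm, h.2.symm⟩⟩
  loopless := ⟨fun _ h => h.1 rfl⟩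

instance : DecidableRel icosahedronGraph.Adj :=
  fun _ _ => inferInstanceAs (Decidable (_ ∧ (_ ∨ _)))

/-- The 2-uniform scramble on the icosahedron graph: the eggs are exactly the
two-element vertex subsets `{u, v}` with `u` and `v` adjacent. -/
def icosahedronTwoUniform : Finset (Finset (Fin 12)) :=
  ((Finset.univ : Finset (Fin 12 × Fin 12)).filter fun p =>
    icosahedronGraph.Adj p.1 p.2).image fun p => {p.1, p.2}

/-!
Hitting sets of the 2-uniform scramble are exactly the vertex covers, i.e. the complements of
independent sets, so its hitting number is `12 - α = 9`. Everything else rests on two local facts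
checked by computation: the icosahedron is 5-regular, and two distinct vertices have at most two
common neighbours. Counting paths `v - w - v'` with `w ∈ A`, `v ≠ v' ∈ B` and applying
Cauchy–Schwarz gives `D ^ 2 ≤ |A| (D + 2 |B| (|B| - 1))` for `D = ∑_{w ∈ A} |N(w) ∩ B|`.
For an independent 4-set `B` and `A = Bᶜ` we have `D = 20`, and `400 ≤ 352` fails, so `α = 3`.
For `A = B` the inequality bounds the number `D` of ordered edges inside `A` well enough that the
cut `5 |A| - D` is at least `8` whenever `2 ≤ |A| ≤ 6`; cuts are symmetric under complement.
-/

open SimpleGraph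

namespace SimpleGraph

variable {V : Type} [DecidableEq V] (G : SimpleGraph V) [DecidableRel G.Adj]

theorem sum_card_filter_adj_le (A : Finset V) :
    ∑ u ∈ A, #{v ∈ A | G.Adj u v} ≤ #A * (#A - 1) := by
  calc ∑ u ∈ A, #{v ∈ A | G.Adj u v}
      ≤ ∑ u ∈ A, #(A.erase u) := sum_le_sum fun u _ => card_le_card fun v hv => by
        rw [mem_filter] at hv
        exact mem_erase.2 ⟨hv.2.ne', hv.1⟩
    _ = #A * (#A - 1) := by
      rw [sum_congr rfl fun u hu => card_erase_of_mem hu, sum_const, smul_eq_mul]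

variable [Fintype V] {G} {c : ℕ}

theorem sum_card_offDiag_filter_adj_le
    (hc : ∀ u v, u ≠ v → #(G.neighborFinset u ∩ G.neighborFinset v) ≤ c) (A B : Finset V) :
    ∑ w ∈ A, #{v ∈ B | G.Adj w v}.offDiag ≤ c * #B.offDiag := by
  calc ∑ w ∈ A, #{v ∈ B | G.Adj w v}.offDiag
      = ∑ w ∈ A, #{p ∈ B.offDiag | G.Adj w p.1 ∧ G.Adj w p.2} := by
        refine sum_congr rfl fun w _ => congrArg card ?_
        ext p
        simp only [mem_offDiag, mem_filter]
        tauto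
    _ = ∑ p ∈ B.offDiag, #{w ∈ A | G.Adj w p.1 ∧ G.Adj w p.2} :=
        sum_card_bipartiteAbove_eq_sum_card_bipartiteBelow _
    _ ≤ ∑ _p ∈ B.offDiag, c := sum_le_sum fun p hp => by
        refine (card_le_card fun w hw => ?_).trans (hc p.1 p.2 (mem_offDiag.1 hp).2.2)
        rw [mem_filter] at hw
        simp only [mem_inter, mem_neighborFinset]
        exact ⟨hw.2.1.symm, hw.2.2.symm⟩
    _ = c * #B.offDiag := by rw [sum_const, smul_eq_mul, mul_comm]

theorem sq_sum_card_filter_adj_le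
    (hc : ∀ u v, u ≠ v → #(G.neighborFinset u ∩ G.neighborFinset v) ≤ c) (A B : Finset V) :
    (∑ w ∈ A, #{v ∈ B | G.Adj w v}) ^ 2 ≤
      #A * (∑ w ∈ A, #{v ∈ B | G.Adj w v} + c * #B.offDiag) := by
  calc (∑ w ∈ A, #{v ∈ B | G.Adj w v}) ^ 2
      ≤ #A * ∑ w ∈ A, #{v ∈ B | G.Adj w v} ^ 2 := sq_sum_le_card_mul_sum_sq
    _ = #A * ∑ w ∈ A, (#{v ∈ B | G.Adj w v} + #{v ∈ B | G.Adj w v}.offDiag) := by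
        congr 1
        refine sum_congr rfl fun w _ => ?_
        rw [offDiag_card, sq, Nat.add_sub_cancel' (Nat.le_mul_self _)]
    _ ≤ _ := by
        rw [sum_add_distrib]
        gcongr
        exact sum_card_offDiag_filter_adj_le hc A B

theorem IsIndepSet.sq_mul_card_le {s : Finset V} (hs : G.IsIndepSet s)
    (hc : ∀ u v, u ≠ v → #(G.neighborFinset u ∩ G.neighborFinset v) ≤ c) {d : ℕ}
    (hd : G.IsRegularOfDegree d) : (d * #s) ^ 2 ≤ #sᶜ * (d * #s + c * #s.offDiag) := by
  have hedges : ∑ w ∈ sᶜ, #{v ∈ s | G.Adj w v} = d * #s :=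
    calc ∑ w ∈ sᶜ, #{v ∈ s | G.Adj w v}
        = ∑ v ∈ s, #{w ∈ sᶜ | G.Adj w v} :=
          sum_card_bipartiteAbove_eq_sum_card_bipartiteBelow _
      _ = ∑ _v ∈ s, d := sum_congr rfl fun v hv => by
          rw [← hd v, ← card_neighborFinset_eq_degree]
          congr 1
          ext w
          simp only [mem_filter, mem_compl, mem_neighborFinset]
          exact ⟨fun h => h.2.symm, fun h => ⟨fun hw => hs hv hw h.ne h, h.symm⟩⟩
      _ = d * #s := by rw [sum_const, smul_eq_mul, mul_comm]
  simpa only [hedges] using sq_sum_card_filter_adj_le hc sᶜ s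

end SimpleGraph

namespace Multigraph

variable {V : Type} [Fintype V] [DecidableEq V]

theorem cutSize_compl (G : Multigraph V) (A : Finset V) : G.cutSize Aᶜ = G.cutSize A := by
  rw [cutSize, cutSize, compl_compl, sum_comm]
  exact sum_congr rfl fun u _ => sum_congr rfl fun v _ => G.symm v u

theorem cutSize_add_sum_sum (G : Multigraph V) (A : Finset V) :
    G.cutSize A + ∑ u ∈ A, ∑ v ∈ A, G.m u v = ∑ u ∈ A, G.val u := by
  rw [cutSize, ← sum_add_distrib]
  exact sum_congr rfl fun u _ => by rw [add_comm, val, sum_add_sum_compl]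

theorem sum_ofSimpleGraph_m (G : SimpleGraph V) [DecidableRel G.Adj] (u : V) (B : Finset V) :
    ∑ v ∈ B, (ofSimpleGraph G).m u v = #{v ∈ B | G.Adj u v} :=
  sum_boole _ _

theorem val_ofSimpleGraph (G : SimpleGraph V) [DecidableRel G.Adj] (u : V) :
    (ofSimpleGraph G).val u = G.degree u := by
  rw [val, sum_ofSimpleGraph_m, ← card_neighborFinset_eq_degree, neighborFinset_eq_filter]

end Multigraph

section TwoUniform

variable {V : Type} [Fintype V] [DecidableEq V] (G : SimpleGraph V) [DecidableRel G.Adj]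

def twoUniformScramble : Finset (Finset V) :=
  ((univ : Finset (V × V)).filter fun p => G.Adj p.1 p.2).image fun p => {p.1, p.2}

variable {G}

theorem mem_twoUniformScramble {e : Finset V} :
    e ∈ twoUniformScramble G ↔ ∃ u v, G.Adj u v ∧ {u, v} = e := by
  simp [twoUniformScramble]

theorem pair_mem_twoUniformScramble {u v : V} (h : G.Adj u v) :
    {u, v} ∈ twoUniformScramble G :=
  mem_twoUniformScramble.2 ⟨u, v, h, rfl⟩

theorem two_le_card_of_mem_twoUniformScramble {e A : Finset V} (he : e ∈ twoUniformScramble G)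
    (heA : e ⊆ A) : 2 ≤ #A := by
  obtain ⟨u, v, huv, rfl⟩ := mem_twoUniformScramble.1 he
  exact (card_pair huv.ne).symm.le.trans (card_le_card heA)

theorem isHittingSet_twoUniformScramble_iff {W : Finset V} :
    IsHittingSet (twoUniformScramble G) W ↔ G.IsVertexCover W := by
  constructor
  · intro h u v huv
    obtain ⟨x, hx⟩ := h _ (pair_mem_twoUniformScramble huv)
    simp only [mem_inter, mem_insert, mem_singleton] at hx
    rcases hx with ⟨rfl | rfl, hx⟩
    exacts [Or.inl hx, Or.inr hx]
  · intro h e he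
    obtain ⟨u, v, huv, rfl⟩ := mem_twoUniformScramble.1 he
    rcases h huv with hu | hv
    exacts [⟨u, by simpa using hu⟩, ⟨v, by simpa using hv⟩]

theorem hittingNumber_twoUniformScramble :
    hittingNumber (twoUniformScramble G) = Fintype.card V - G.indepNum := by
  apply le_antisymm
  · obtain ⟨s, hs⟩ := G.exists_isNIndepSet_indepNum
    refine Nat.sInf_le ⟨sᶜ, ?_, by rw [card_compl, hs.card_eq]⟩
    rw [isHittingSet_twoUniformScramble_iff, coe_compl, isVertexCover_compl]
    exact hs.isIndepSet
  · refine le_csInf ⟨_, univ, isHittingSet_twoUniformScramble_iff.2 (by simp), rfl⟩ ?_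
    rintro k ⟨W, hW, rfl⟩
    rw [isHittingSet_twoUniformScramble_iff, ← isIndepSet_compl_iff_isVertexCover,
      ← coe_compl] at hW
    have := hW.card_le_indepNum
    rw [card_compl] at this
    have := card_le_univ W
    omega

end TwoUniform

theorem icosahedronGraph_isRegularOfDegree : icosahedronGraph.IsRegularOfDegree 5 := by
  intro v
  revert v
  decide

theorem icosahedronGraph_card_commonNeighbors_le : ∀ u v, u ≠ v →
    #(icosahedronGraph.neighborFinset u ∩ icosahedronGraph.neighborFinset v) ≤ 2 := by
  decide

theorem icosahedronGraph_card_le_three_of_isIndepSet {s : Finset (Fin 12)}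
    (hs : icosahedronGraph.IsIndepSet s) : #s ≤ 3 := by
  by_contra! h
  obtain ⟨t, hts, ht⟩ := exists_subset_card_eq (show 4 ≤ #s from h)
  have ht' : icosahedronGraph.IsIndepSet t := hs.mono (coe_subset.2 hts)
  have := ht'.sq_mul_card_le icosahedronGraph_card_commonNeighbors_le
    icosahedronGraph_isRegularOfDegree
  rw [card_compl, offDiag_card, ht] at this
  norm_num at this

theorem icosahedronGraph_indepNum : icosahedronGraph.indepNum = 3 := by
  apply le_antisymm
  · obtain ⟨s, hs⟩ := icosahedronGraph.exists_isNIndepSet_indepNum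
    exact hs.card_eq ▸ icosahedronGraph_card_le_three_of_isIndepSet hs.isIndepSet
  · have h : icosahedronGraph.IsIndepSet (({1, 8, 10} : Finset (Fin 12)) : Set (Fin 12)) := by
      rw [isIndepSet_iff, coe_insert, coe_insert, coe_singleton]
      simp only [Set.pairwise_insert, Set.pairwise_singleton]
      decide
    exact h.card_le_indepNum

theorem icosahedronGraph_eight_le_cutSize_of_card_le_six {A : Finset (Fin 12)} (h2 : 2 ≤ #A)
    (h6 : #A ≤ 6) : 8 ≤ (Multigraph.ofSimpleGraph icosahedronGraph).cutSize A := by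
  set D := ∑ u ∈ A, #{v ∈ A | icosahedronGraph.Adj u v}
  have hsplit : (Multigraph.ofSimpleGraph icosahedronGraph).cutSize A + D = 5 * #A := by
    have := (Multigraph.ofSimpleGraph icosahedronGraph).cutSize_add_sum_sum A
    simp only [Multigraph.sum_ofSimpleGraph_m, Multigraph.val_ofSimpleGraph,
      icosahedronGraph_isRegularOfDegree.degree_eq, sum_const, smul_eq_mul] at this
    rw [this, mul_comm]
  have hD : D ≤ #A * (#A - 1) := icosahedronGraph.sum_card_filter_adj_le A
  have hCS : D ^ 2 ≤ #A * (D + 2 * (#A * #A - #A)) := by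
    simpa only [offDiag_card] using
      sq_sum_card_filter_adj_le icosahedronGraph_card_commonNeighbors_le A A
  suffices D + 8 ≤ 5 * #A by omega
  interval_cases #A <;> nlinarith

theorem icosahedronGraph_eight_le_cutSize {A : Finset (Fin 12)} (h2 : 2 ≤ #A) (h2' : 2 ≤ #Aᶜ) :
    8 ≤ (Multigraph.ofSimpleGraph icosahedronGraph).cutSize A := by
  have hcompl : #Aᶜ = 12 - #A := by rw [card_compl, Fintype.card_fin]
  by_cases h6 : #A ≤ 6
  · exact icosahedronGraph_eight_le_cutSize_of_card_le_six h2 h6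
  · rw [← Multigraph.cutSize_compl]
    exact icosahedronGraph_eight_le_cutSize_of_card_le_six h2' (by omega)

theorem icosahedronTwoUniform_eq : icosahedronTwoUniform = twoUniformScramble icosahedronGraph :=
  rfl

theorem icosahedronTwoUniform_hittingNumber : hittingNumber icosahedronTwoUniform = 9 := by
  rw [icosahedronTwoUniform_eq, hittingNumber_twoUniformScramble, icosahedronGraph_indepNum,
    Fintype.card_fin]

theorem icosahedronTwoUniform_eggCutNumber :
    (Multigraph.ofSimpleGraph icosahedronGraph).eggCutNumber icosahedronTwoUniform = 8 := by
  rw [icosahedronTwoUniform_eq]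
  apply le_antisymm
  · have hcut : (Multigraph.ofSimpleGraph icosahedronGraph).cutSize {0, 1} = 8 := by decide
    refine sInf_le ⟨{0, 1}, ⟨_, pair_mem_twoUniformScramble (by decide), subset_rfl⟩,
      ⟨_, pair_mem_twoUniformScramble (u := 8) (v := 9) (by decide), by decide⟩, ?_⟩
    rw [hcut]
    rfl
  · refine le_sInf ?_
    rintro k ⟨A, ⟨e, he, heA⟩, ⟨e', he', heA'⟩, rfl⟩
    exact_mod_cast icosahedronGraph_eight_le_cutSize (two_le_card_of_mem_twoUniformScramble he heA)
      (two_le_card_of_mem_twoUniformScramble he' heA')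

/-- The 2-uniform scramble on the icosahedron graph has hitting number `9`,
egg-cut number `8`, and hence order `8`. -/
theorem icosahedron_twoUniform_order :
    hittingNumber icosahedronTwoUniform = 9 ∧
    (Multigraph.ofSimpleGraph icosahedronGraph).eggCutNumber icosahedronTwoUniform
      = (8 : ℕ∞) ∧
    (Multigraph.ofSimpleGraph icosahedronGraph).scrambleOrder icosahedronTwoUniform
      = (8 : ℕ∞) := by
  refine ⟨icosahedronTwoUniform_hittingNumber, icosahedronTwoUniform_eggCutNumber, ?_⟩
  rw [Multigraph.scrambleOrder, icosahedronTwoUniform_hittingNumber,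
    icosahedronTwoUniform_eggCutNumber]
  rfl
end

section
/- (Riemann–Roch Theorem for Graphs) For every divisor D on a finite connected loopless multigraph G, r(D) − r(K − D) = deg(D) + 1 − g(G), where K is the canonical divisor and g(G) = |E(G)| − |V(G)| + 1. -/
open Finset

namespace Multigraph

variable {V : Type} [Fintype V] [DecidableEq V] (G : Multigraph V)

/-- The rank of a divisor `D`: the largest integer `r` such that for every
effective divisor `E` of degree `r`, the divisor `D - E` is equivalent to an
effective divisor.  (Every `r ≤ -1` satisfies the condition vacuously, so the
rank is `-1` exactly when `D` itself is not equivalent to an effective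
divisor.) -/
noncomputable def rank (D : V → ℤ) : ℤ :=
  sSup {r : ℤ | ∀ E : V → ℤ, Divisor.Effective E → Divisor.deg E = r →
    ∃ F : V → ℤ, G.Equivalent (fun v => D v - E v) F ∧ Divisor.Effective F}

/-- The number of edges of `G`. -/
def numEdges : ℕ := (∑ u : V, ∑ v : V, G.m u v) / 2

/-- The genus (first Betti number) of `G`: `|E(G)| - |V(G)| + 1`. -/
def genus : ℤ := (G.numEdges : ℤ) - (Fintype.card V : ℤ) + 1

/-- The canonical divisor of `G`: `val(v) - 2` chips on each vertex `v`. -/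
def canonical : V → ℤ := fun v => (G.val v : ℤ) - 2

end Multigraph


namespace RRaux

variable {V : Type} [Fintype V] [DecidableEq V] (G : Multigraph V)

/-- The effect of a firing script `f`. -/
def lap (f : V → ℤ) : V → ℤ := fun w => ∑ v, (G.m w v : ℤ) * (f v - f w)

lemma lap_add (f g : V → ℤ) : lap G (f + g) = lap G f + lap G g := by
  funext w
  simp only [lap, Pi.add_apply, ← Finset.sum_add_distrib]
  congr 1; funext v; ring

lemma lap_shift (f : V → ℤ) (c : ℤ) : lap G (fun v => f v + c) = lap G f := by
  funext w; simp only [lap]; congr 1; funext v; ring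

lemma lap_single (v w : V) :
    lap G (fun u => if u = v then 1 else 0) w
      = (G.m w v : ℤ) - (if w = v then (G.val w : ℤ) else 0) := by
  unfold lap
  have h1 : ∀ u : V, (G.m w u : ℤ) * ((if u = v then (1:ℤ) else 0) - (if w = v then 1 else 0))
      = (if u = v then (G.m w u:ℤ) else 0) - (if w = v then (G.m w u:ℤ) else 0) := by
    intro u; split <;> split <;> ring
  simp only [h1, Finset.sum_sub_distrib]
  have h2 : (∑ u, if u = v then (G.m w u:ℤ) else 0) = (G.m w v : ℤ) := by
    rw [Finset.sum_ite_eq' univ v (fun u => (G.m w u : ℤ))]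
    simp
  have h3 : (∑ u : V, if w = v then (G.m w u:ℤ) else 0) = if w = v then (G.val w : ℤ) else 0 := by
    split
    · rw [Multigraph.val]; push_cast; rfl
    · simp
  rw [h2, h3]

lemma fire_eq (v : V) (D : V → ℤ) :
    G.fire v D = fun w => D w + lap G (fun u => if u = v then 1 else 0) w := by
  funext w
  rw [lap_single]
  simp only [Multigraph.fire, G.symm v w]
  rcases eq_or_ne w v with rfl | hw
  · simp; ring
  · simp [hw]

lemma equivalent_add_lap (D : V → ℤ) (f : V → ℤ) (hf : ∀ v, 0 ≤ f v) :
    G.Equivalent D (fun w => D w + lap G f w) := by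
  generalize hn : (∑ v, f v).toNat = n
  induction n generalizing f D with
  | zero =>
    have hsum : ∑ v, f v = 0 := by
      have h0 : (0:ℤ) ≤ ∑ v, f v := Finset.sum_nonneg (fun v _ => hf v)
      omega
    have hz : ∀ v ∈ univ, f v = 0 :=
      (Finset.sum_eq_zero_iff_of_nonneg (fun v _ => hf v)).mp hsum
    have : (fun w => D w + lap G f w) = D := by
      funext w
      have : lap G f w = 0 := by
        unfold lap
        apply Finset.sum_eq_zero
        intro v _
        rw [hz v (mem_univ v), hz w (mem_univ w)]
        ring
      rw [this]; ring
    rw [this]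
    exact Relation.ReflTransGen.refl
  | succ n ih =>
    have hsum : 0 < ∑ v, f v := by
      rcases (le_or_gt (∑ v, f v) 0) with h | h
      · exfalso; omega
      · exact h
    have : ∃ v, 0 < f v := by
      by_contra hcon
      push_neg at hcon
      have : ∑ v, f v ≤ 0 := by
        apply Finset.sum_nonpos; intro v _; exact hcon v
      omega
    obtain ⟨v, hv⟩ := this
    set f₁ : V → ℤ := fun u => f u - if u = v then 1 else 0 with hf₁def
    have hstep : G.Equivalent D (G.fire v D) := Relation.ReflTransGen.single ⟨v, rfl⟩
    have hf₁ : ∀ u, 0 ≤ f₁ u := by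
      intro u; simp only [hf₁def]; split
      · subst_eqs; omega
      · simpa using hf u
    have hsum1 : (∑ u, f₁ u).toNat = n := by
      have e : ∑ u, f₁ u = (∑ u, f u) - 1 := by
        simp only [hf₁def, Finset.sum_sub_distrib]
        rw [Finset.sum_ite_eq' univ v (fun _ => (1:ℤ))]
        simp
      omega
    have hrest := ih (G.fire v D) f₁ hf₁ hsum1
    have heq : (fun w => (G.fire v D) w + lap G f₁ w) = (fun w => D w + lap G f w) := by
      rw [fire_eq]
      funext w
      have : f = (fun u => if u = v then (1:ℤ) else 0) + f₁ := by
        funext u; simp [hf₁def]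
      rw [this, lap_add]
      simp only [Pi.add_apply]
      ring
    rw [heq] at hrest
    exact hstep.trans hrest

lemma equivalent_iff {D D' : V → ℤ} :
    G.Equivalent D D' ↔ ∃ f : V → ℤ, D' = fun w => D w + lap G f w := by
  constructor
  · intro h
    induction h with
    | refl =>
      exact ⟨0, by funext w; simp [lap]⟩
    | tail _ hstep ih =>
      obtain ⟨v, rfl⟩ := hstep
      obtain ⟨f, rfl⟩ := ih
      refine ⟨f + (fun u => if u = v then 1 else 0), ?_⟩
      rw [fire_eq, lap_add]
      funext w
      simp only [Pi.add_apply]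
      ring
  · rintro ⟨f, rfl⟩
    cases isEmpty_or_nonempty V with
    | inl h =>
      have : (fun w => D w + lap G f w) = D := by funext w; exact absurd trivial (h.elim w)
      rw [this]
      exact Relation.ReflTransGen.refl
    | inr h =>
      set c : ℤ := Finset.univ.inf' (Finset.univ_nonempty) f with hc
      have hge : ∀ v, 0 ≤ f v - c := by
        intro v
        have : c ≤ f v := Finset.inf'_le f (mem_univ v)
        omega
      have := equivalent_add_lap G D (fun v => f v - c) hge
      have heq : lap G (fun v => f v - c) = lap G f := by
        have : (fun v => f v - c) = (fun v => f v + (-c)) := by funext v; ring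
        rw [this, lap_shift]
      rwa [heq] at this

lemma deg_lap (f : V → ℤ) : ∑ w, lap G f w = 0 := by
  unfold lap
  have h : ∀ w v : V, (G.m w v:ℤ) * (f v - f w) = (G.m w v:ℤ) * f v - (G.m v w:ℤ) * f w := by
    intro w v; rw [G.symm v w]; ring
  simp only [h, Finset.sum_sub_distrib]
  rw [Finset.sum_comm]
  simp

/-- `D` is equivalent to an effective divisor. -/
def EffE (D : V → ℤ) : Prop := ∃ f : V → ℤ, Divisor.Effective (fun w => D w + lap G f w)

lemma effE_iff (D : V → ℤ) :
    (∃ F, G.Equivalent D F ∧ Divisor.Effective F) ↔ EffE G D := by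
  constructor
  · rintro ⟨F, hFe, hF⟩
    obtain ⟨f, rfl⟩ := (equivalent_iff G).mp hFe
    exact ⟨f, hF⟩
  · rintro ⟨f, hf⟩
    exact ⟨_, (equivalent_iff G).mpr ⟨f, rfl⟩, hf⟩

lemma effE_mono {D D' : V → ℤ} (h : EffE G D) (hle : ∀ v, D v ≤ D' v) : EffE G D' := by
  obtain ⟨f, hf⟩ := h
  refine ⟨f, fun v => ?_⟩
  have h1 := hf v
  have h2 := hle v
  dsimp only at h1 ⊢
  omega

lemma effE_lap {D : V → ℤ} (g : V → ℤ) (h : EffE G (fun w => D w + lap G g w)) : EffE G D := by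
  obtain ⟨f, hf⟩ := h
  refine ⟨g + f, fun v => ?_⟩
  have := hf v
  rw [lap_add]
  simp only [Pi.add_apply] at *
  omega

lemma effE_deg {D : V → ℤ} (h : EffE G D) : 0 ≤ Divisor.deg D := by
  obtain ⟨f, hf⟩ := h
  have h1 : 0 ≤ ∑ v, (D v + lap G f v) := Finset.sum_nonneg (fun v _ => hf v)
  rw [Finset.sum_add_distrib, deg_lap] at h1
  simpa [Divisor.deg] using h1

/-- The divisor attached to the linear order induced by an injection `σ : V → ℤ`. -/
def nu (σ : V → ℤ) : V → ℤ :=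
  fun v => (∑ u ∈ univ.filter (fun u => σ u < σ v), (G.m v u : ℤ)) - 1

lemma sum_m_split {σ : V → ℤ} (hσ : Function.Injective σ) :
    ∑ u : V, ∑ v : V, G.m u v
      = 2 * ∑ v : V, ∑ u ∈ univ.filter (fun u => σ u < σ v), G.m v u := by
  have hterm : ∀ p : V × V, G.m p.1 p.2
      = (if σ p.1 < σ p.2 then G.m p.1 p.2 else 0)
        + (if σ p.2 < σ p.1 then G.m p.1 p.2 else 0) := by
    rintro ⟨u, v⟩
    rcases lt_trichotomy (σ u) (σ v) with h | h | h
    · simp [h, asymm h]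
    · have : u = v := hσ h
      subst this
      simp [G.loopless u]
    · simp [h, asymm h]
  have hswap : (∑ p ∈ univ ×ˢ univ, if σ p.1 < σ p.2 then G.m p.1 p.2 else 0)
      = ∑ p ∈ univ ×ˢ univ, if σ p.2 < σ p.1 then G.m p.1 p.2 else 0 := by
    rw [Finset.univ_product_univ]
    apply Fintype.sum_equiv (Equiv.prodComm V V)
    rintro ⟨u, v⟩
    simp [Equiv.prodComm, G.symm u v]
    by_cases hc : σ u < σ v <;> simp [hc]
  have hM : ∑ u : V, ∑ v : V, G.m u v = ∑ p ∈ univ ×ˢ univ, G.m p.1 p.2 := by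
    rw [Finset.sum_product]
  have hT : (∑ v : V, ∑ u ∈ univ.filter (fun u => σ u < σ v), G.m v u)
      = ∑ p ∈ univ ×ˢ univ, if σ p.2 < σ p.1 then G.m p.1 p.2 else 0 := by
    rw [Finset.sum_product]
    congr 1
    funext v
    rw [Finset.sum_filter]
  rw [hM, hT]
  calc ∑ p ∈ univ ×ˢ univ, G.m p.1 p.2
      = (∑ p ∈ univ ×ˢ univ, if σ p.1 < σ p.2 then G.m p.1 p.2 else 0)
        + ∑ p ∈ univ ×ˢ univ, if σ p.2 < σ p.1 then G.m p.1 p.2 else 0 := by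
        rw [← Finset.sum_add_distrib]
        exact Finset.sum_congr rfl (fun p _ => hterm p)
    _ = 2 * ∑ p ∈ univ ×ˢ univ, if σ p.2 < σ p.1 then G.m p.1 p.2 else 0 := by
        rw [hswap]; ring

lemma numEdges_eq {σ : V → ℤ} (hσ : Function.Injective σ) :
    G.numEdges = ∑ v : V, ∑ u ∈ univ.filter (fun u => σ u < σ v), G.m v u := by
  rw [Multigraph.numEdges, sum_m_split G hσ]
  omega

lemma nu_deg {σ : V → ℤ} (hσ : Function.Injective σ) :
    Divisor.deg (nu G σ) = G.genus - 1 := by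
  unfold Divisor.deg nu Multigraph.genus
  rw [Finset.sum_sub_distrib, numEdges_eq G hσ]
  push_cast
  simp [Finset.card_univ]

lemma nu_canonical {σ : V → ℤ} (hσ : Function.Injective σ) (v : V) :
    G.canonical v - nu G σ v = nu G (-σ) v := by
  unfold Multigraph.canonical nu
  have hfilt : univ.filter (fun u => (-σ) u < (-σ) v) = univ.filter (fun u => σ v < σ u) := by
    ext u
    simp [neg_lt_neg_iff]
  rw [hfilt]
  have hnot : univ.filter (fun u => ¬ σ u < σ v) = insert v (univ.filter (fun u => σ v < σ u)) := by
    ext u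
    simp only [Finset.mem_filter, Finset.mem_insert, mem_univ, true_and, not_lt]
    constructor
    · intro h
      rcases lt_or_eq_of_le h with h' | h'
      · right; exact h'
      · left; exact hσ h'.symm
    · rintro (rfl | h)
      · exact le_refl _
      · exact le_of_lt h
  have hsplit := Finset.sum_filter_add_sum_filter_not univ (fun u => σ u < σ v)
      (fun u => (G.m v u : ℤ))
  rw [hnot, Finset.sum_insert (by simp)] at hsplit
  have hval : (G.val v : ℤ) = ∑ u : V, (G.m v u : ℤ) := by
    rw [Multigraph.val]; push_cast; rfl
  rw [G.loopless v] at hsplit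
  push_cast at hsplit
  rw [hval]
  linarith

lemma nu_not_effE [Nonempty V] {σ : V → ℤ} (hσ : Function.Injective σ) :
    ¬ EffE G (nu G σ) := by
  rintro ⟨f, hf⟩
  obtain ⟨b, _, hb⟩ := Finset.exists_max_image univ f univ_nonempty
  have hAne : (univ.filter (fun u => f u = f b)).Nonempty := ⟨b, by simp⟩
  obtain ⟨v, hvA, hv⟩ := Finset.exists_min_image (univ.filter (fun u => f u = f b)) σ hAne
  simp only [Finset.mem_filter, mem_univ, true_and] at hvA
  have hmax : ∀ u, f u ≤ f v := by
    intro u; rw [hvA]; exact hb u (mem_univ u)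
  have hkey : ∀ u, (G.m v u : ℤ) * (f u - f v)
      ≤ (if σ u < σ v then -(G.m v u : ℤ) else 0) := by
    intro u
    split
    · next h =>
      have huA : f u ≠ f b := by
        intro he
        have := hv u (by simp [he])
        omega
      have : f u ≤ f v - 1 := by
        have := hmax u
        rw [hvA] at *
        omega
      have hm : (0:ℤ) ≤ (G.m v u : ℤ) := by positivity
      nlinarith
    · have := hmax u
      have hm : (0:ℤ) ≤ (G.m v u : ℤ) := by positivity
      nlinarith
  have hsum : lap G f v ≤ -(∑ u ∈ univ.filter (fun u => σ u < σ v), (G.m v u : ℤ)) := by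
    unfold lap
    calc ∑ u, (G.m v u : ℤ) * (f u - f v)
        ≤ ∑ u, (if σ u < σ v then -(G.m v u : ℤ) else 0) :=
          Finset.sum_le_sum (fun u _ => hkey u)
      _ = -(∑ u ∈ univ.filter (fun u => σ u < σ v), (G.m v u : ℤ)) := by
          rw [← Finset.sum_filter, ← Finset.sum_neg_distrib]
  have := hf v
  dsimp only at this
  unfold nu at this
  omega

lemma dist_step (hG : G.Connected) (q v : V) (h : v ≠ q) :
    ∃ u, G.toSimpleGraph.Adj v u
      ∧ G.toSimpleGraph.dist q u + 1 = G.toSimpleGraph.dist q v := by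
  have hG' : G.toSimpleGraph.Connected := hG
  obtain ⟨p, hp⟩ := (hG'.preconnected q v).exists_walk_length_eq_dist
  obtain ⟨u, a, p', hcons⟩ := SimpleGraph.Walk.exists_eq_cons_of_ne h p.reverse
  refine ⟨u, a, ?_⟩
  have h1 : G.toSimpleGraph.dist q u ≤ p'.reverse.length := SimpleGraph.dist_le p'.reverse
  have hlen : p.length = p'.length + 1 := by
    have := congrArg SimpleGraph.Walk.length hcons
    simpa [SimpleGraph.Walk.length_reverse] using this
  have h1' : G.toSimpleGraph.dist q u ≤ p'.length := by
    simpa [SimpleGraph.Walk.length_reverse] using h1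
  have h3 : G.toSimpleGraph.dist q v ≤ G.toSimpleGraph.dist q u + 1 := by
    have htr := hG'.dist_triangle (u := q) (v := u) (w := v)
    have hd1 : G.toSimpleGraph.dist u v = 1 := SimpleGraph.dist_eq_one_iff_adj.mpr a.symm
    omega
  omega

lemma dist_lt_card (hG : G.Connected) (q v : V) :
    G.toSimpleGraph.dist q v < Fintype.card V := by
  have hG' : G.toSimpleGraph.Connected := hG
  obtain ⟨p, hp⟩ := (hG'.preconnected q v).exists_walk_length_eq_dist
  have h1 : G.toSimpleGraph.dist q v ≤ p.toPath.1.length := SimpleGraph.dist_le _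
  have := p.toPath.2.length_lt
  omega

lemma dist_adj (hG : G.Connected) (q u v : V) (h : G.toSimpleGraph.Adj v u) :
    G.toSimpleGraph.dist q u ≤ G.toSimpleGraph.dist q v + 1 := by
  have hG' : G.toSimpleGraph.Connected := hG
  have htr := hG'.dist_triangle (u := q) (v := v) (w := u)
  have hd1 : G.toSimpleGraph.dist v u = 1 := SimpleGraph.dist_eq_one_iff_adj.mpr h
  omega

lemma adj_of_m_pos {u v : V} (h : 0 < G.m u v) : G.toSimpleGraph.Adj u v := h

lemma exists_script (hG : G.Connected) (q : V) (N : ℤ) :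
    ∃ f : V → ℤ, ∀ v, v ≠ q → N ≤ lap G f v := by
  classical
  set d : V → ℕ := fun v => G.toSimpleGraph.dist q v with hd
  set n : ℕ := Fintype.card V with hn
  set M : ℤ := ((∑ u : V, ∑ w : V, G.m u w : ℕ) : ℤ) with hM
  have hM0 : 0 ≤ M := by positivity
  set B : ℤ := M + 1 with hB
  have hB1 : 1 ≤ B := by omega
  set P : ℤ := max N 1 with hP
  have hP1 : 1 ≤ P := le_max_right N 1
  set g : ℕ → ℤ := fun k => ∑ j ∈ Finset.range k, P * B ^ (n - j) with hg
  have hpow : ∀ k : ℕ, (1:ℤ) ≤ B ^ k := fun k => one_le_pow₀ hB1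
  have hincr : ∀ k : ℕ, g (k + 1) = g k + P * B ^ (n - k) := by
    intro k
    simp only [hg, Finset.sum_range_succ]
  have hmono : ∀ {j k : ℕ}, j ≤ k → g j ≤ g k := by
    intro j k hjk
    apply Finset.sum_le_sum_of_subset_of_nonneg (Finset.range_subset_range.mpr hjk)
    intro i _ _
    have := hpow (n - i)
    nlinarith
  refine ⟨fun v => -(g (d v)), ?_⟩
  intro v hv
  obtain ⟨u₀, hadj, hdu₀⟩ := dist_step G hG q v hv
  have hdu₀' : d u₀ + 1 = d v := hdu₀
  set k : ℕ := d v with hk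
  have hk1 : 1 ≤ k := by omega
  have hkn : k < n := dist_lt_card G hG q v
  have hterm : ∀ u, u ≠ u₀ →
      -((G.m v u : ℤ) * (P * B ^ (n - k))) ≤ (G.m v u : ℤ) * (-(g (d u)) - -(g (d v))) := by
    intro u _
    rcases Nat.eq_zero_or_pos (G.m v u) with hz | hpos
    · simp [hz]
    · have hadj' : G.toSimpleGraph.Adj v u := hpos
      have hdu : d u ≤ k + 1 := dist_adj G hG q u v hadj'
      have h1 : g (d u) ≤ g (k + 1) := hmono hdu
      have h2 : g (k + 1) = g k + P * B ^ (n - k) := hincr k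
      have hmn : (1:ℤ) ≤ (G.m v u : ℤ) := by exact_mod_cast hpos
      have hpn : (0:ℤ) ≤ P * B ^ (n - k) := by
        have := hpow (n - k); nlinarith
      rw [← hk]
      nlinarith [hpow (n-k)]
  have hu₀ : (P * B ^ (n - k)) * B ≤ (G.m v u₀ : ℤ) * (-(g (d u₀)) - -(g (d v))) := by
    have hmn : (1:ℤ) ≤ (G.m v u₀ : ℤ) := by
      have : 0 < G.m v u₀ := hadj
      exact_mod_cast this
    have hdu : d u₀ = k - 1 := by omega
    have hexp : n - (k - 1) = (n - k) + 1 := by omega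
    have : -(g (d u₀)) - -(g (d v)) = g k - g (k - 1) := by rw [hdu, ← hk]; ring
    rw [this]
    have hsucc : g ((k-1) + 1) = g (k-1) + P * B ^ (n - (k-1)) := hincr (k-1)
    have hkk : (k - 1) + 1 = k := by omega
    rw [hkk] at hsucc
    have h4 : g k - g (k-1) = P * B ^ ((n-k)+1) := by rw [hsucc, hexp]; ring
    rw [h4, pow_succ]
    have hpn : (0:ℤ) ≤ P * (B ^ (n - k) * B) :=
      mul_nonneg (by omega) (mul_nonneg (pow_nonneg (by omega) _) (by omega))
    calc P * B ^ (n-k) * B = 1 * (P * (B ^ (n - k) * B)) := by ring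
      _ ≤ (G.m v u₀ : ℤ) * (P * (B ^ (n - k) * B)) := mul_le_mul_of_nonneg_right hmn hpn
  have hsum : lap G (fun v => -(g (d v))) v
      = (G.m v u₀ : ℤ) * (-(g (d u₀)) - -(g (d v)))
        + ∑ u ∈ univ.erase u₀, (G.m v u : ℤ) * (-(g (d u)) - -(g (d v))) := by
    simp only [lap]
    exact (Finset.add_sum_erase univ _ (mem_univ u₀)).symm
  have hrest : -(M * (P * B ^ (n - k)))
      ≤ ∑ u ∈ univ.erase u₀, (G.m v u : ℤ) * (-(g (d u)) - -(g (d v))) := by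
    have h5 : ∑ u ∈ univ.erase u₀, -((G.m v u : ℤ) * (P * B ^ (n - k)))
        ≤ ∑ u ∈ univ.erase u₀, (G.m v u : ℤ) * (-(g (d u)) - -(g (d v))) := by
      apply Finset.sum_le_sum
      intro u hu
      exact hterm u (Finset.ne_of_mem_erase hu)
    refine le_trans ?_ h5
    have h6 : ∑ u ∈ univ.erase u₀, -((G.m v u : ℤ) * (P * B ^ (n - k)))
        = -((∑ u ∈ univ.erase u₀, (G.m v u : ℤ)) * (P * B ^ (n - k))) := by
      rw [Finset.sum_mul]
      exact Finset.sum_neg_distrib _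
    rw [h6]
    have h7 : (∑ u ∈ univ.erase u₀, (G.m v u : ℤ)) ≤ M := by
      have h8 : (∑ u ∈ univ.erase u₀, (G.m v u : ℤ)) ≤ ∑ u : V, (G.m v u : ℤ) := by
        apply Finset.sum_le_sum_of_subset_of_nonneg (Finset.erase_subset _ _)
        intro i _ _; positivity
      have h9 : (∑ u : V, (G.m v u : ℤ)) ≤ M := by
        rw [hM]
        push_cast
        apply Finset.single_le_sum (f := fun x => ∑ w : V, (G.m x w : ℤ)) ?_ (mem_univ v)
        intro i _; positivity
      omega
    have hpn : (0:ℤ) ≤ P * B ^ (n - k) := by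
      have := hpow (n - k); nlinarith
    nlinarith
  have hfinal : N ≤ (P * B ^ (n-k)) * B - M * (P * B ^ (n - k)) := by
    have h10 : (P * B ^ (n-k)) * B - M * (P * B ^ (n - k)) = P * B ^ (n-k) * (B - M) := by ring
    rw [h10]
    have hBM : B - M = 1 := by omega
    rw [hBM, mul_one]
    have := hpow (n-k)
    have hPN : N ≤ P := le_max_left N 1
    nlinarith
  rw [hsum]
  omega

lemma lap_indicator (A : Finset V) (v : V) :
    lap G (fun u => if u ∈ A then 1 else 0) v
      = if v ∈ A then -(∑ u ∈ Aᶜ, (G.m v u : ℤ)) else ∑ u ∈ A, (G.m v u : ℤ) := by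
  simp only [lap]
  by_cases hv : v ∈ A
  · simp only [hv, if_true]
    have hbody : ∀ u : V, (G.m v u : ℤ) * ((if u ∈ A then 1 else 0) - 1)
        = if u ∈ A then 0 else -(G.m v u : ℤ) := by
      intro u; split <;> ring
    have hfilt : univ.filter (fun u => u ∉ A) = Aᶜ := by ext u; simp
    rw [Finset.sum_congr rfl (fun u _ => hbody u), Finset.sum_ite, Finset.sum_const_zero,
      zero_add, hfilt, Finset.sum_neg_distrib]
  · simp only [hv, if_false]
    have hbody : ∀ u : V, (G.m v u : ℤ) * ((if u ∈ A then 1 else 0) - 0)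
        = if u ∈ A then (G.m v u : ℤ) else 0 := by
      intro u; split <;> ring
    have hfilt : univ.filter (fun u => u ∈ A) = A := by ext u; simp
    rw [Finset.sum_congr rfl (fun u _ => hbody u), Finset.sum_ite, Finset.sum_const_zero,
      add_zero, hfilt]

lemma exists_reduced (hG : G.Connected) (q : V) (D : V → ℤ) :
    ∃ f : V → ℤ, (∀ v, v ≠ q → 0 ≤ D v + lap G f v) ∧
      ∀ A : Finset V, A.Nonempty → q ∉ A →
        ∃ v ∈ A, D v + lap G f v < ∑ u ∈ Aᶜ, (G.m v u : ℤ) := by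
  classical
  have hne : Nonempty V := (show G.toSimpleGraph.Connected from hG).nonempty
  set d : V → ℕ := fun v => G.toSimpleGraph.dist q v with hd
  set n : ℕ := Fintype.card V with hn
  set M : ℤ := ((∑ u : V, ∑ w : V, G.m u w : ℕ) : ℤ) with hM
  have hM0 : 0 ≤ M := by positivity
  set c : ℤ := M + 2 with hc
  have hc1 : 1 ≤ c := by omega
  set w : V → ℤ := fun v => c ^ (n - d v) with hw
  have hw1 : ∀ v, 1 ≤ w v := fun v => one_le_pow₀ hc1
  have hwq : ∀ v, w v ≤ w q := by
    intro v
    have hdq : d q = 0 := SimpleGraph.dist_self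
    simp only [hw, hdq, Nat.sub_zero]
    exact pow_le_pow_right₀ hc1 (Nat.sub_le n (d v))
  set Φ : (V → ℤ) → ℤ := fun f => ∑ v, (D v + lap G f v) * w v with hΦ
  set Feas : (V → ℤ) → Prop := fun f => ∀ v, v ≠ q → 0 ≤ D v + lap G f v with hFeas
  -- the feasible set is nonempty
  have hfeas0 : ∃ f, Feas f := by
    obtain ⟨f, hf⟩ := exists_script G hG q (Finset.univ.sup' univ_nonempty (fun v => -D v))
    refine ⟨f, fun v hv => ?_⟩
    have h1 := hf v hv
    have h2 : -D v ≤ Finset.univ.sup' univ_nonempty (fun v => -D v) := by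
      exact Finset.le_sup' (fun v => -D v) (Finset.mem_univ v)
    omega
  -- Φ is bounded above on the feasible set
  have hbdd : ∀ f, Feas f → Φ f ≤ Divisor.deg D * w q := by
    intro f hf
    have h1 : Φ f ≤ ∑ v, (D v + lap G f v) * w q := by
      apply Finset.sum_le_sum
      intro v _
      rcases eq_or_ne v q with rfl | hv
      · exact le_refl _
      · exact mul_le_mul_of_nonneg_left (hwq v) (hf v hv)
    have h2 : ∑ v, (D v + lap G f v) * w q = Divisor.deg D * w q := by
      rw [← Finset.sum_mul]
      congr 1
      rw [Finset.sum_add_distrib, deg_lap]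
      simp [Divisor.deg]
    omega
  obtain ⟨t₀, ⟨f₀, hf₀, hΦ₀⟩, hmax⟩ :=
    Int.exists_greatest_of_bdd (P := fun t => ∃ f, Feas f ∧ Φ f = t)
      ⟨Divisor.deg D * w q, fun t ⟨f, hf, ht⟩ => ht ▸ hbdd f hf⟩
      (hfeas0.elim fun f hf => ⟨Φ f, f, hf, rfl⟩)
  refine ⟨f₀, hf₀, ?_⟩
  intro A hA hqA
  by_contra hcon
  push_neg at hcon
  -- fire the set A : strictly increases Φ while staying feasible
  set oneA : V → ℤ := fun u => if u ∈ A then 1 else 0 with honeA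
  set f₁ : V → ℤ := f₀ + oneA with hf₁
  have hlap₁ : ∀ v, lap G f₁ v = lap G f₀ v + lap G oneA v := by
    intro v
    rw [hf₁, lap_add]
    rfl
  have hfeas₁ : Feas f₁ := by
    intro v hv
    rw [hlap₁, lap_indicator]
    by_cases hvA : v ∈ A
    · simp only [hvA, if_true]
      have := hcon v hvA
      omega
    · simp only [hvA, if_false]
      have h1 := hf₀ v hv
      have h2 : (0:ℤ) ≤ ∑ u ∈ A, (G.m v u : ℤ) := by positivity
      omega
  -- the change in Φ
  have hΔ : Φ f₁ = Φ f₀ + ∑ v, lap G oneA v * w v := by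
    simp only [hΦ]
    rw [← Finset.sum_add_distrib]
    apply Finset.sum_congr rfl
    intro v _
    rw [hlap₁]
    ring
  -- pick the vertex of A closest to q, and its closer neighbour
  obtain ⟨v₀, hv₀A, hv₀min⟩ := Finset.exists_min_image A d hA
  have hv₀q : v₀ ≠ q := fun h => hqA (h ▸ hv₀A)
  obtain ⟨u₀, hadj, hdu₀⟩ := dist_step G hG q v₀ hv₀q
  have hdu₀' : d u₀ + 1 = d v₀ := hdu₀
  have hu₀A : u₀ ∉ A := by
    intro hmem
    have := hv₀min u₀ hmem
    omega
  have hwA : ∀ v ∈ A, w v ≤ w v₀ := by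
    intro v hvmem
    have := hv₀min v hvmem
    simp only [hw]
    exact pow_le_pow_right₀ hc1 (by omega)
  have hwv₀ : 0 ≤ w v₀ := le_trans zero_le_one (hw1 v₀)
  -- the positive part : the sum over Aᶜ is at least the u₀ term
  have hpos : c * w v₀ ≤ ∑ v ∈ Aᶜ, lap G oneA v * w v := by
    have hterm : ∀ v ∈ Aᶜ, (0:ℤ) ≤ lap G oneA v * w v := by
      intro v hvmem
      rw [Finset.mem_compl] at hvmem
      rw [lap_indicator, if_neg hvmem]
      have h2 : (0:ℤ) ≤ ∑ u ∈ A, (G.m v u : ℤ) := by positivity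
      have := hw1 v
      nlinarith
    have hsingle : lap G oneA u₀ * w u₀ ≤ ∑ v ∈ Aᶜ, lap G oneA v * w v :=
      Finset.single_le_sum hterm (Finset.mem_compl.mpr hu₀A)
    refine le_trans ?_ hsingle
    rw [lap_indicator, if_neg hu₀A]
    have hm1 : (1:ℤ) ≤ (G.m u₀ v₀ : ℤ) := by
      have : 0 < G.m u₀ v₀ := hadj.symm
      exact_mod_cast this
    have h3 : (G.m u₀ v₀ : ℤ) ≤ ∑ u ∈ A, (G.m u₀ u : ℤ) :=
      Finset.single_le_sum (f := fun u => (G.m u₀ u : ℤ)) (fun u _ => by positivity) hv₀A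
    have h4 : w u₀ = c * w v₀ := by
      have hkn : d v₀ < n := dist_lt_card G hG q v₀
      have hexp : n - d u₀ = (n - d v₀) + 1 := by omega
      simp only [hw, hexp, pow_succ]
      ring
    rw [h4]
    have hcw : 0 ≤ c * w v₀ := mul_nonneg (by omega) hwv₀
    nlinarith
  -- the negative part is at least -M * w v₀
  have hnegpart : -(M * w v₀) ≤ ∑ v ∈ A, lap G oneA v * w v := by
    have hterm : ∀ v ∈ A, -((∑ u ∈ Aᶜ, (G.m v u : ℤ)) * w v₀) ≤ lap G oneA v * w v := by
      intro v hvmem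
      rw [lap_indicator, if_pos hvmem]
      have h2 : (0:ℤ) ≤ ∑ u ∈ Aᶜ, (G.m v u : ℤ) := by positivity
      have h3 := hwA v hvmem
      have h4 : 0 ≤ w v := le_trans zero_le_one (hw1 v)
      nlinarith
    have h5 : ∑ v ∈ A, -((∑ u ∈ Aᶜ, (G.m v u : ℤ)) * w v₀)
        ≤ ∑ v ∈ A, lap G oneA v * w v := Finset.sum_le_sum hterm
    refine le_trans ?_ h5
    have h6 : ∑ v ∈ A, -((∑ u ∈ Aᶜ, (G.m v u : ℤ)) * w v₀)
        = -((∑ v ∈ A, ∑ u ∈ Aᶜ, (G.m v u : ℤ)) * w v₀) := by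
      rw [Finset.sum_mul]
      exact Finset.sum_neg_distrib _
    rw [h6]
    have h7 : ∑ v ∈ A, ∑ u ∈ Aᶜ, (G.m v u : ℤ) ≤ M := by
      rw [hM]
      push_cast
      calc ∑ v ∈ A, ∑ u ∈ Aᶜ, (G.m v u : ℤ)
          ≤ ∑ v ∈ A, ∑ u : V, (G.m v u : ℤ) := by
            apply Finset.sum_le_sum
            intro v _
            apply Finset.sum_le_sum_of_subset_of_nonneg (Finset.subset_univ _)
            intro u _ _; positivity
        _ ≤ ∑ v : V, ∑ u : V, (G.m v u : ℤ) := by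
            apply Finset.sum_le_sum_of_subset_of_nonneg (Finset.subset_univ _)
            intro u _ _; positivity
    nlinarith
  have hsplit : ∑ v, lap G oneA v * w v
      = (∑ v ∈ A, lap G oneA v * w v) + ∑ v ∈ Aᶜ, lap G oneA v * w v :=
    (Finset.sum_add_sum_compl A _).symm
  have hΔpos : 0 < ∑ v, lap G oneA v * w v := by
    rw [hsplit]
    have heq2 : c * w v₀ - M * w v₀ = 2 * w v₀ := by rw [hc]; ring
    have h1 := hw1 v₀
    linarith
  have hcontra := hmax (Φ f₁) ⟨f₁, hfeas₁, rfl⟩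
  rw [hΔ, hΦ₀] at hcontra
  omega

/-- A list is good if every element except the last has fewer chips than edges to
later elements. -/
def Good (D' : V → ℤ) (l : List V) : Prop :=
  ∀ (i : ℕ) (hi : i + 1 < l.length),
    D' (l[i]'(by omega)) < ∑ u ∈ (l.drop (i+1)).toFinset, (G.m (l[i]'(by omega)) u : ℤ)

lemma build_aux (q : V) (D' : V → ℤ)
    (hred : ∀ A : Finset V, A.Nonempty → q ∉ A → ∃ v ∈ A, D' v < ∑ u ∈ Aᶜ, (G.m v u : ℤ)) :
    ∀ (k : ℕ) (A : Finset V) (l : List V), q ∉ A → A.card = k →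
      l.Nodup → (∀ v, v ∈ l ↔ v ∉ A) → Good G D' l → (∃ l₀, l = l₀ ++ [q]) →
      ∃ L : List V, L.Nodup ∧ (∀ v, v ∈ L) ∧ Good G D' L ∧ ∃ L₀, L = L₀ ++ [q] := by
  intro k
  induction k with
  | zero =>
    intro A l hqA hcard hnd hmem hgood happ
    have hAe : A = ∅ := Finset.card_eq_zero.mp hcard
    subst hAe
    exact ⟨l, hnd, fun v => (hmem v).mpr (by simp), hgood, happ⟩
  | succ k ih =>
    intro A l hqA hcard hnd hmem hgood happ
    have hA : A.Nonempty := Finset.card_pos.mp (by omega)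
    obtain ⟨v, hvA, hv⟩ := hred A hA hqA
    have hlfin : l.toFinset = Aᶜ := by
      ext u
      simp only [List.mem_toFinset, Finset.mem_compl]
      exact hmem u
    have hvl : v ∉ l := fun hmem' => ((hmem v).mp hmem') hvA
    refine ih (A.erase v) (v :: l) (fun hqe => hqA (Finset.mem_of_mem_erase hqe))
      (by rw [Finset.card_erase_of_mem hvA]; omega)
      (List.nodup_cons.mpr ⟨hvl, hnd⟩) ?_ ?_ ?_
    · intro u
      rcases eq_or_ne u v with rfl | huv
      · simp [hvA]
      · simp only [List.mem_cons, hmem u, Finset.mem_erase]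
        constructor
        · rintro (rfl | hnot)
          · exact absurd rfl huv
          · exact fun hc => hnot hc.2
        · intro hcon
          right
          intro hmemA
          exact hcon ⟨huv, hmemA⟩
    · intro i hi
      match i with
      | 0 =>
        simp only [List.getElem_cons_zero, List.drop_succ_cons, List.drop_zero]
        rw [hlfin]
        exact hv
      | (j+1) =>
        have hj : j + 1 < l.length := by
          simp only [List.length_cons] at hi
          omega
        have e1 : (v :: l)[j+1]'(by simp only [List.length_cons]; omega) = l[j]'(by omega) :=
          List.getElem_cons_succ v l j (by simp only [List.length_cons]; omega)
        have e2 : (v :: l).drop (j+2) = l.drop (j+1) := List.drop_succ_cons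
        simp only [e1, e2]
        exact hgood j hj
    · obtain ⟨l₀, rfl⟩ := happ
      exact ⟨v :: l₀, rfl⟩

lemma build_list (q : V) (D' : V → ℤ) (hq : D' q < 0)
    (hred : ∀ A : Finset V, A.Nonempty → q ∉ A → ∃ v ∈ A, D' v < ∑ u ∈ Aᶜ, (G.m v u : ℤ)) :
    ∃ σ : V → ℤ, Function.Injective σ ∧ ∀ v, D' v ≤ nu G σ v := by
  classical
  obtain ⟨L, hnd, hcompl, hgood, L₀, happ⟩ :=
    build_aux G q D' hred (Finset.univ.erase q).card (Finset.univ.erase q) [q]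
      (by simp) rfl (by simp)
      (fun v => by simp [Finset.mem_erase])
      (by intro i hi; simp at hi) ⟨[], rfl⟩
  set σ : V → ℤ := fun v => -(L.idxOf v : ℤ) with hσ
  have hinj : Function.Injective σ := by
    intro a b hab
    have ha : a ∈ L := hcompl a
    have hb : b ∈ L := hcompl b
    have hidx : L.idxOf a = L.idxOf b := by
      simp only [hσ, neg_inj, Nat.cast_inj] at hab
      exact hab
    have h1 : L[L.idxOf a]'(List.idxOf_lt_length_iff.mpr ha) = a := List.getElem_idxOf _
    have h2 : L[L.idxOf b]'(List.idxOf_lt_length_iff.mpr hb) = b := List.getElem_idxOf _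
    rw [← h1, ← h2]
    simp only [hidx]
  refine ⟨σ, hinj, ?_⟩
  intro v
  have hvL : v ∈ L := hcompl v
  have hiL : L.idxOf v < L.length := List.idxOf_lt_length_iff.mpr hvL
  set i := L.idxOf v with hi
  have hgetv : L[i]'hiL = v := List.getElem_idxOf hiL
  have hfilt : univ.filter (fun u => σ u < σ v) = (L.drop (i+1)).toFinset := by
    ext u
    simp only [Finset.mem_filter, mem_univ, true_and, List.mem_toFinset, hσ]
    constructor
    · intro hlt
      have hu : u ∈ L := hcompl u
      have hul : L.idxOf u < L.length := List.idxOf_lt_length_iff.mpr hu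
      have hui : i < L.idxOf u := by omega
      rw [List.mem_iff_getElem]
      refine ⟨L.idxOf u - (i+1), by simp only [List.length_drop]; omega, ?_⟩
      rw [List.getElem_drop]
      have hidx2 : i + 1 + (L.idxOf u - (i + 1)) = L.idxOf u := by omega
      simp only [hidx2]
      exact List.getElem_idxOf hul
    · intro hmem
      rw [List.mem_iff_getElem] at hmem
      obtain ⟨j, hj, hju⟩ := hmem
      rw [List.getElem_drop] at hju
      have hjlen : i + 1 + j < L.length := by
        simp only [List.length_drop] at hj
        omega
      have hu : u ∈ L := hcompl u
      have hul : L.idxOf u < L.length := List.idxOf_lt_length_iff.mpr hu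
      have hgetu : L[L.idxOf u]'hul = u := List.getElem_idxOf hul
      have : L.idxOf u = i + 1 + j := hnd.getElem_inj_iff.mp (hgetu.trans hju.symm)
      omega
  unfold nu
  rw [hfilt]
  rcases lt_or_ge (i+1) L.length with hlast | hlast
  · have := hgood i hlast
    rw [hgetv] at this
    omega
  · -- v is the last element, i.e. v = q
    have hlen : L.length = L₀.length + 1 := by rw [happ]; simp
    have hieq : i = L₀.length := by omega
    have hvq : v = q := by
      rw [← hgetv, List.getElem_of_eq happ hiL]
      exact List.getElem_concat_length (l := L₀) (a := q) (i := i) hieq _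
    have hdrop : L.drop (i+1) = [] := by
      apply List.drop_eq_nil_of_le
      omega
    rw [hdrop]
    simp only [List.toFinset_nil, Finset.sum_empty]
    rw [hvq]
    omega

lemma lemmaA (hG : G.Connected) {D : V → ℤ} (h : ¬ EffE G D) :
    ∃ σ : V → ℤ, Function.Injective σ ∧ ∃ f : V → ℤ,
      ∀ v, D v + lap G f v ≤ nu G σ v := by
  have hne : Nonempty V := (show G.toSimpleGraph.Connected from hG).nonempty
  obtain ⟨q⟩ := hne
  obtain ⟨f, hfeas, hred⟩ := exists_reduced G hG q D
  set D' : V → ℤ := fun v => D v + lap G f v with hD'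
  have hq : D' q < 0 := by
    by_contra hcon
    push_neg at hcon
    refine h ⟨f, fun v => ?_⟩
    rcases eq_or_ne v q with rfl | hv
    · exact hcon
    · exact hfeas v hv
  obtain ⟨σ, hinj, hle⟩ := build_list G q D' hq (fun A hA hqA => hred A hA hqA)
  exact ⟨σ, hinj, f, hle⟩

/-- The defining set of the rank. -/
def S (D : V → ℤ) : Set ℤ :=
  {r : ℤ | ∀ E : V → ℤ, Divisor.Effective E → Divisor.deg E = r →
    ∃ F : V → ℤ, G.Equivalent (fun v => D v - E v) F ∧ Divisor.Effective F}

lemma mem_S_iff (D : V → ℤ) (r : ℤ) :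
    r ∈ S G D ↔ ∀ E : V → ℤ, Divisor.Effective E → Divisor.deg E = r →
      EffE G (fun v => D v - E v) := by
  unfold S
  constructor
  · intro h E hE hd
    exact (effE_iff G _).mp (h E hE hd)
  · intro h E hE hd
    exact (effE_iff G _).mpr (h E hE hd)

lemma S_neg (D : V → ℤ) {r : ℤ} (hr : r < 0) : r ∈ S G D := by
  intro E hE hd
  exfalso
  have : 0 ≤ Divisor.deg E := Finset.sum_nonneg (fun v _ => hE v)
  omega

lemma S_bdd [Nonempty V] (D : V → ℤ) : S G D ⊆ Set.Iic (max (Divisor.deg D) 0) := by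
  intro r hr
  simp only [Set.mem_Iic]
  by_contra hcon
  push_neg at hcon
  obtain ⟨q⟩ := ‹Nonempty V›
  set E : V → ℤ := fun v => if v = q then r else 0 with hEdef
  have hE : Divisor.Effective E := by
    intro v; simp only [hEdef]; split <;> omega
  have hd : Divisor.deg E = r := by
    simp only [Divisor.deg, hEdef]
    rw [Finset.sum_ite_eq' univ q (fun _ => r)]
    simp
  have := effE_deg G ((mem_S_iff G D r).mp hr E hE hd)
  have : Divisor.deg (fun v => D v - E v) = Divisor.deg D - r := by
    simp only [Divisor.deg] at hd ⊢
    rw [Finset.sum_sub_distrib, hd]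
  omega

lemma S_dc [Nonempty V] (D : V → ℤ) {r r' : ℤ} (h : r ∈ S G D) (h' : r' ≤ r) : r' ∈ S G D := by
  rcases lt_or_ge r' 0 with hneg | hpos
  · exact S_neg G D hneg
  rw [mem_S_iff] at h ⊢
  intro E' hE' hd'
  obtain ⟨q⟩ := ‹Nonempty V›
  set E : V → ℤ := fun v => E' v + (if v = q then r - r' else 0) with hEdef
  have hE : Divisor.Effective E := by
    intro v; have := hE' v; simp only [hEdef]; split <;> omega
  have hd : Divisor.deg E = r := by
    simp only [Divisor.deg, hEdef, Finset.sum_add_distrib]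
    rw [Finset.sum_ite_eq' univ q (fun _ => r - r')]
    simp only [Divisor.deg] at hd'
    simp [hd']
  exact effE_mono G (h E hE hd) (fun v => by simp only [hEdef]; split <;> omega)

lemma S_bddAbove [Nonempty V] (D : V → ℤ) : BddAbove (S G D) :=
  ⟨max (Divisor.deg D) 0, fun _ hr => S_bdd G D hr⟩

lemma rank_eq_sSup (D : V → ℤ) : G.rank D = sSup (S G D) := rfl

lemma rank_mem [Nonempty V] (D : V → ℤ) : G.rank D ∈ S G D := by
  rw [rank_eq_sSup]
  exact Int.csSup_mem ⟨-1, S_neg G D (by norm_num)⟩ (S_bddAbove G D)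

lemma le_rank (D : V → ℤ) {r : ℤ} [Nonempty V] (h : r ∈ S G D) : r ≤ G.rank D := by
  rw [rank_eq_sSup]
  exact le_csSup (S_bddAbove G D) h

lemma deg_canonical : Divisor.deg (G.canonical) = 2 * G.genus - 2 := by
  set σ0 : V → ℤ := fun v => ((Fintype.equivFin V v : ℕ) : ℤ) with hσ0
  have hσ : Function.Injective σ0 := by
    intro a b h
    simp only [hσ0] at h
    exact (Fintype.equivFin V).injective (Fin.ext (by exact_mod_cast h))
  have h1 := nu_deg G hσ
  have hneg : Function.Injective (-σ0) := by
    intro a b h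
    apply hσ
    have h2 : -σ0 a = -σ0 b := h
    rw [neg_inj] at h2
    omega
  have h2 : Divisor.deg (nu G (-σ0)) = G.genus - 1 := nu_deg G hneg
  have h3 : Divisor.deg (G.canonical)
      = Divisor.deg (nu G σ0) + Divisor.deg (nu G (-σ0)) := by
    unfold Divisor.deg
    rw [← Finset.sum_add_distrib]
    apply Finset.sum_congr rfl
    intro v _
    have := nu_canonical G hσ v
    omega
  omega

lemma key (hG : G.Connected) (D : V → ℤ) :
    G.rank D - Divisor.deg D + G.genus - 1 ≤ G.rank (fun v => G.canonical v - D v) := by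
  have hne : Nonempty V := (show G.toSimpleGraph.Connected from hG).nonempty
  set s := G.rank D - Divisor.deg D + G.genus - 1 with hs
  apply le_rank
  rcases lt_or_ge s 0 with hneg | hpos
  · exact S_neg G _ hneg
  rw [mem_S_iff]
  intro E hE hdeg
  by_contra hcon
  obtain ⟨σ, hσ, f, hle⟩ := lemmaA G hG hcon
  set H : V → ℤ := fun v => nu G σ v - ((G.canonical v - D v - E v) + lap G f v) with hH
  have hHeff : Divisor.Effective H := by
    intro v
    have h1 := hle v
    simp only [hH]
    omega
  have hdegH : Divisor.deg H = G.rank D := by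
    have hnu := nu_deg G hσ
    have hK := deg_canonical G
    have hlap := deg_lap G f
    have hdegD : Divisor.deg D = ∑ v, D v := rfl
    have hdegE : Divisor.deg E = ∑ v, E v := rfl
    have expand : Divisor.deg H = Divisor.deg (nu G σ)
        - ((Divisor.deg G.canonical - (∑ v, D v) - (∑ v, E v)) + ∑ v, lap G f v) := by
      simp only [Divisor.deg, hH, Finset.sum_sub_distrib, Finset.sum_add_distrib]
    rw [expand, hnu, hK, hlap]
    omega
  have hmem := rank_mem G D
  rw [mem_S_iff] at hmem
  have h2 : EffE G (fun v => D v - H v) := hmem H hHeff hdegH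
  have e : (fun v => D v - H v) = fun v => (nu G (-σ) v - E v) + lap G f v := by
    funext v
    have hnc := nu_canonical G hσ v
    simp only [hH]
    omega
  rw [e] at h2
  have h3 : EffE G (fun v => nu G (-σ) v - E v) := effE_lap G f h2
  have h4 : EffE G (nu G (-σ)) := effE_mono G h3 (fun v => by have := hE v; omega)
  have hneg : Function.Injective (-σ) := by
    intro a b hab
    apply hσ
    have h5 : -σ a = -σ b := hab
    rw [neg_inj] at h5
    omega
  exact nu_not_effE G hneg h4

end RRaux


/-- The Riemann–Roch theorem for graphs: for every divisor `D` on a finite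
connected loopless multigraph `G`,
`r(D) - r(K - D) = deg(D) + 1 - g(G)`, where `K` is the canonical divisor and
`g(G) = |E(G)| - |V(G)| + 1`. -/
theorem riemannRoch_for_graphs {V : Type} [Fintype V] [DecidableEq V]
    (G : Multigraph V) (hG : G.Connected) (D : V → ℤ) :
    G.rank D - G.rank (fun v => G.canonical v - D v)
      = Divisor.deg D + 1 - G.genus := by
  have h1 := RRaux.key G hG D
  have h2 := RRaux.key G hG (fun v => G.canonical v - D v)
  have e1 : (fun v => G.canonical v - (G.canonical v - D v)) = D := by funext v; ring
  rw [e1] at h2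
  have e2 : Divisor.deg (fun v => G.canonical v - D v)
      = 2 * G.genus - 2 - Divisor.deg D := by
    have hc := RRaux.deg_canonical G
    simp only [Divisor.deg, Finset.sum_sub_distrib] at *
    omega
  rw [e2] at h2
  omega
end
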